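/- arXiv:0708.0246 — 10 statements merged into one kernel-verified Lean document; each statement's English description precedes it below -/
import Mathlib

section
/- Let R be a ring and φ : R → S a ring homomorphism. The set σ of morphisms s in the category of finitely presented right R-modules such that s ⊗_R S is an isomorphism is a severe right Ore set: it contains all isomorphisms, is closed under composition, is closed under pushouts (given s : A → B in σ and a : A → C, the pushout of s along a lies in σ), and is severely right revengeful (if s : A → B lies in σ and a : B → C satisfies s ∘ a = 0, then the cokernel map C → coker(a) lies in σ). -/
open CategoryTheory CategoryTheory.Limits

universe u

/-- The pushout of `s : A ⟶ B` along `a : A ⟶ C'`, defined via the cokernel of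
`(s a) : A ⟶ B ⊞ C'`. -/
noncomputable def pushoutAlong {R : Type u} [Ring R]
    {A B C' : ModuleCat.{u} R} (s : A ⟶ B) (a : A ⟶ C') :
    C' ⟶ cokernel (biprod.lift s a) :=
  biprod.inr ≫ cokernel.π (biprod.lift s a)

/-- The inverse sends the class of `(b, c)` to `c - a (s⁻¹ b)`. -/
lemma isIso_biprod_inr_comp_cokernel_π {𝒜 : Type*} [Category 𝒜] [Preadditive 𝒜] {A B C : 𝒜}
    (s : A ⟶ B) (a : A ⟶ C) [IsIso s]
    [HasBinaryBiproduct B C] [HasCokernel (biprod.lift s a)] :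
    IsIso (biprod.inr ≫ cokernel.π (biprod.lift s a)) := by
  set π := cokernel.π (biprod.lift s a)
  have hinl : biprod.inl ≫ π = -(inv s ≫ a ≫ biprod.inr ≫ π) := by
    rw [← cancel_epi s, Preadditive.comp_neg, IsIso.hom_inv_id_assoc, eq_neg_iff_add_eq_zero,
      ← Category.assoc, ← Category.assoc, ← Preadditive.add_comp, ← biprod.lift_eq]
    exact cokernel.condition _
  have hzero : biprod.lift s a ≫ biprod.desc (-(inv s ≫ a)) (𝟙 C) = 0 := by simp
  refine ⟨cokernel.desc _ _ hzero, by simp [π], ?_⟩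
  rw [← cancel_epi π, Category.comp_id, ← Category.assoc, cokernel.π_desc]
  ext <;> simp [hinl]

namespace CategoryTheory.Functor

variable {𝒜 ℬ : Type*} [Category 𝒜] [Category ℬ] [Preadditive 𝒜] [Preadditive ℬ]
  (F : 𝒜 ⥤ ℬ) {A B C : 𝒜}

lemma exists_map_biprod_inr_comp_cokernel_π [F.Additive] (s : A ⟶ B) (a : A ⟶ C)
    [HasBinaryBiproduct B C] [HasBinaryBiproduct (F.obj B) (F.obj C)]
    [HasCokernel (biprod.lift s a)] [HasCokernel (biprod.lift (F.map s) (F.map a))]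
    [PreservesColimit (parallelPair (biprod.lift s a) 0) F] :
    ∃ e : cokernel (biprod.lift (F.map s) (F.map a)) ≅ F.obj (cokernel (biprod.lift s a)),
      F.map (biprod.inr ≫ cokernel.π (biprod.lift s a)) =
        biprod.inr ≫ cokernel.π (biprod.lift (F.map s) (F.map a)) ≫ e.hom := by
  have := preservesBinaryBiproduct_of_preservesBiproduct F B C
  refine ⟨cokernel.mapIso _ _ (Iso.refl _) (F.mapBiprod B C).symm ?_ ≪≫
    (PreservesCokernel.iso F _).symm, ?_⟩
  · simpa using biprod.lift_mapBiprod F B C s a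
  · simp only [Iso.trans_hom, Iso.symm_hom, PreservesCokernel.iso_inv, cokernel.mapIso,
      cokernel.map, cokernel.π_desc_assoc, π_comp_cokernelComparison, Functor.mapBiprod_inv,
      Category.assoc, biprod.inr_desc_assoc, F.map_comp]

lemma isIso_map_cokernel_π_of_map_eq_zero [F.PreservesZeroMorphisms] (a : B ⟶ C)
    [HasCokernel a] [PreservesColimit (parallelPair a 0) F] (ha : F.map a = 0) :
    IsIso (F.map (cokernel.π a)) := by
  have := cokernel.π_of_zero ha
  have h := PreservesCokernel.π_iso_hom F a
  rw [← Iso.eq_comp_inv] at h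
  rw [h]
  infer_instance

end CategoryTheory.Functor

/-- Let `φ : R →+* S` be a ring homomorphism and let `F = - ⊗_R S` be the induction
functor, i.e. the left adjoint to restriction of scalars along `φ`.  The set `σ` of maps
`s` between finitely presented `R`-modules such that `s ⊗_R S` is an isomorphism is a
severe right Ore set: it contains all isomorphisms, is closed under composition, under
pushouts, and is severely right revengeful. -/
theorem tensor_inverted_severe_right_ore
    {R : Type u} [Ring R] {S : Type u} [Ring S] (φ : R →+* S)
    (F : ModuleCat.{u} R ⥤ ModuleCat.{u} S)
    (adj : F ⊣ ModuleCat.restrictScalars φ) :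
    (∀ ⦃A B : ModuleCat.{u} R⦄,
      Module.FinitePresentation R A → Module.FinitePresentation R B →
      ∀ (f : A ⟶ B), IsIso f → IsIso (F.map f)) ∧
    (∀ ⦃A B B' : ModuleCat.{u} R⦄,
      Module.FinitePresentation R A → Module.FinitePresentation R B →
      Module.FinitePresentation R B' →
      ∀ (f : A ⟶ B) (g : B ⟶ B'),
      IsIso (F.map f) → IsIso (F.map g) → IsIso (F.map (f ≫ g))) ∧
    (∀ ⦃A B C' : ModuleCat.{u} R⦄,
      Module.FinitePresentation R A → Module.FinitePresentation R B →
      Module.FinitePresentation R C' →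
      ∀ (s : A ⟶ B) (a : A ⟶ C'),
      IsIso (F.map s) → IsIso (F.map (pushoutAlong s a))) ∧
    (∀ ⦃A B C' : ModuleCat.{u} R⦄,
      Module.FinitePresentation R A → Module.FinitePresentation R B →
      Module.FinitePresentation R C' →
      ∀ (s : A ⟶ B) (a : B ⟶ C'),
      IsIso (F.map s) → s ≫ a = 0 → IsIso (F.map (cokernel.π a))) := by
  have : F.Additive := adj.left_adjoint_additive
  have : PreservesColimitsOfSize.{0, 0} F := adj.leftAdjoint_preservesColimits
  refine ⟨fun _ _ _ _ f _ ↦ inferInstance, fun _ _ _ _ _ _ f g _ _ ↦ ?_,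
    fun _ _ _ _ _ _ s a _ ↦ ?_, fun _ _ _ _ _ _ s a _ hsa ↦ ?_⟩
  · rw [F.map_comp]
    infer_instance
  · obtain ⟨e, he⟩ := F.exists_map_biprod_inr_comp_cokernel_π s a
    have := isIso_biprod_inr_comp_cokernel_π (F.map s) (F.map a)
    rw [pushoutAlong, he, ← Category.assoc]
    infer_instance
  · refine F.isIso_map_cokernel_π_of_map_eq_zero a ?_
    rw [← cancel_epi (F.map s), ← F.map_comp, hsa, F.map_zero, comp_zero]
end

section
/- Let ρ be a Sylvester rank function on an additive category with cokernels. If α : A → B is ρ-full and β : B → C satisfies α ∘ β = 0, then the cokernel map γ : C → coker(β) is ρ-full. -/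
open CategoryTheory CategoryTheory.Limits

universe v u

/-- A Sylvester rank function on an additive category with cokernels. -/
structure SylvesterRank (C : Type u) [Category.{v} C] [Preadditive C]
    [HasCokernels C] [HasBinaryBiproducts C] where
  rk : C → ℕ
  rk_iso : ∀ {A B : C}, (A ≅ B) → rk A = rk B
  rk_biprod : ∀ A B : C, rk (A ⊞ B) = rk A + rk B
  rk_coker_le : ∀ {A B : C} (f : A ⟶ B), rk (cokernel f) ≤ rk B
  rk_le : ∀ {A B : C} (f : A ⟶ B), rk B ≤ rk A + rk (cokernel f)

/-- A map `f : A ⟶ B` is `ρ`-full if `ρ(A) = ρ(B)` and `ρ(coker f) = 0`. -/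
def SylvesterRank.IsRhoFull {C : Type u} [Category.{v} C] [Preadditive C]
    [HasCokernels C] [HasBinaryBiproducts C] (ρ : SylvesterRank C)
    {A B : C} (f : A ⟶ B) : Prop :=
  ρ.rk A = ρ.rk B ∧ ρ.rk (cokernel f) = 0

/-!
Since `α ≫ β = 0`, the map `β` factors through `coker α` as `β'`, and `coker β' ≅ coker β`.
The Sylvester inequality for `β'` gives `ρ(C') ≤ ρ(coker α) + ρ(coker β) = ρ(coker β)`, while
`ρ(coker β) ≤ ρ(C')` always holds. The cokernel of the epimorphism `cokernel.π β` is zero.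
-/

namespace SylvesterRank

variable {C : Type u} [Category.{v} C] [Preadditive C] [HasCokernels C] [HasBinaryBiproducts C]
  (ρ : SylvesterRank C)

/-- `Z ≅ Z ⊞ Z` forces `ρ(Z) = 2 ρ(Z)`. -/
lemma rk_eq_zero_of_isZero {Z : C} (hZ : IsZero Z) : ρ.rk Z = 0 := by
  have hdouble : ρ.rk Z = ρ.rk (Z ⊞ Z) := ρ.rk_iso (isoZeroBiprod hZ)
  have hsum := ρ.rk_biprod Z Z
  omega

lemma rk_le_rk_cokernel_add_rk_cokernel_of_comp_eq_zero {X Y Z : C} (f : X ⟶ Y) (g : Y ⟶ Z)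
    (w : f ≫ g = 0) : ρ.rk Z ≤ ρ.rk (cokernel f) + ρ.rk (cokernel g) := by
  have hcoker : ρ.rk (cokernel (cokernel.desc f g w)) = ρ.rk (cokernel g) :=
    ρ.rk_iso <| (cokernelEpiComp (cokernel.π f) _).symm ≪≫ cokernelIsoOfEq (cokernel.π_desc f g w)
  exact hcoker ▸ ρ.rk_le (cokernel.desc f g w)

lemma isRhoFull_of_epi {X Y : C} (f : X ⟶ Y) [Epi f] (h : ρ.rk X = ρ.rk Y) : ρ.IsRhoFull f :=
  ⟨h, ρ.rk_eq_zero_of_isZero (isZero_cokernel_of_epi f)⟩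

end SylvesterRank

/-- If `α : A ⟶ B` is `ρ`-full and `β : B ⟶ C'` satisfies `α ≫ β = 0`, then the
cokernel map `γ : C' ⟶ coker β` is `ρ`-full. -/
theorem rhoFull_cokernel_of_comp_zero {C : Type u} [Category.{v} C] [Preadditive C]
    [HasCokernels C] [HasBinaryBiproducts C] (ρ : SylvesterRank C)
    {A B C' : C} (α : A ⟶ B) (β : B ⟶ C')
    (hα : ρ.IsRhoFull α) (h : α ≫ β = 0) :
    ρ.IsRhoFull (cokernel.π β) := by
  refine ρ.isRhoFull_of_epi _ (le_antisymm ?_ (ρ.rk_coker_le β))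
  simpa [hα.2] using ρ.rk_le_rk_cokernel_add_rk_cokernel_of_comp_eq_zero α β h
end

section
/- Let ρ be a Sylvester rank function on the category of finitely presented right R-modules. Then the set of ρ-full maps is a severe right Ore set: it contains all isomorphisms, is closed under composition, is closed under pushouts, and is severely right revengeful. -/
/-!
Everything follows from two consequences of the Sylvester inequalities. An epimorphism
`X ⟶ Y` gives `ρ Y ≤ ρ X`, since its cokernel is zero and `ρ 0 = 0` by additivity. And
`ρ (coker (f ≫ g)) ≤ ρ (coker f) + ρ (coker g)`, since the cokernel of the induced map
`coker f ⟶ coker (f ≫ g)` is a quotient of `coker g`. For the pushout `D` of `s` along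
`a : A ⟶ C'`, `coker s` maps onto the cokernel of `C' ⟶ D`, and `ρ D` is squeezed between
`ρ (B ⊞ C') - ρ A = ρ C'` and `ρ C'`. If `s ≫ a = 0` then `coker (s ≫ a) = C'`, so
`ρ C' ≤ ρ (coker s) + ρ (coker a) = ρ (coker a) ≤ ρ C'`.
-/

open CategoryTheory CategoryTheory.Limits

universe u

/-- A Sylvester rank function on the category of finitely presented right `R`-modules:
a map from (finitely presented) `R`-modules to `ℕ`, invariant under isomorphism,
additive on direct sums, and satisfying `ρ(coker f) ≤ ρ(B) ≤ ρ(A) + ρ(coker f)` for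
every map `f : A ⟶ B` of finitely presented modules. -/
structure SylvesterRankFP (R : Type u) [Ring R] where
  rk : ModuleCat.{u} R → ℕ
  rk_iso : ∀ {A B : ModuleCat.{u} R}, Module.FinitePresentation R A →
    Module.FinitePresentation R B → (A ≅ B) → rk A = rk B
  rk_biprod : ∀ (A B : ModuleCat.{u} R), Module.FinitePresentation R A →
    Module.FinitePresentation R B → rk (A ⊞ B) = rk A + rk B
  rk_coker_le : ∀ {A B : ModuleCat.{u} R} (f : A ⟶ B), Module.FinitePresentation R A →
    Module.FinitePresentation R B → rk (cokernel f) ≤ rk B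
  rk_le : ∀ {A B : ModuleCat.{u} R} (f : A ⟶ B), Module.FinitePresentation R A →
    Module.FinitePresentation R B → rk B ≤ rk A + rk (cokernel f)

/-- A map `f : A ⟶ B` is `ρ`-full if `ρ(A) = ρ(B)` and `ρ(coker f) = 0`. -/
def SylvesterRankFP.IsRhoFull {R : Type u} [Ring R] (ρ : SylvesterRankFP R)
    {A B : ModuleCat.{u} R} (f : A ⟶ B) : Prop :=
  ρ.rk A = ρ.rk B ∧ ρ.rk (cokernel f) = 0

section FinitePresentation

variable {R : Type u} [Ring R]

lemma ModuleCat.finitePresentation_cokernel {A B : ModuleCat.{u} R} (f : A ⟶ B)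
    (hA : Module.FinitePresentation R A) (hB : Module.FinitePresentation R B) :
    Module.FinitePresentation R (cokernel f : ModuleCat.{u} R) :=
  have : Module.FinitePresentation R (B ⧸ LinearMap.range f.hom) :=
    Module.finitePresentation_of_surjective _ (Submodule.mkQ_surjective _)
      (by rw [Submodule.ker_mkQ]; exact Submodule.fg_range f.hom)
  .of_equiv (ModuleCat.cokernelIsoRangeQuotient f).symm.toLinearEquiv

lemma ModuleCat.finitePresentation_biprod {A B : ModuleCat.{u} R}
    (hA : Module.FinitePresentation R A) (hB : Module.FinitePresentation R B) :
    Module.FinitePresentation R (A ⊞ B : ModuleCat.{u} R) :=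
  .of_equiv (ModuleCat.biprodIsoProd A B).symm.toLinearEquiv

end FinitePresentation

namespace SylvesterRankFP

variable {R : Type u} [Ring R] (ρ : SylvesterRankFP R)

lemma rk_eq_zero_of_isZero {M : ModuleCat.{u} R} (hM : Module.FinitePresentation R M)
    (h : IsZero M) : ρ.rk M = 0 := by
  have hMM := ρ.rk_biprod M M hM hM
  have hiso := ρ.rk_iso (ModuleCat.finitePresentation_biprod hM hM) hM
    (((biprod_isZero_iff M M).mpr ⟨h, h⟩).iso h)
  omega

lemma rk_cokernel_eq_zero_of_epi {A B : ModuleCat.{u} R} (f : A ⟶ B) [Epi f]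
    (hA : Module.FinitePresentation R A) (hB : Module.FinitePresentation R B) :
    ρ.rk (cokernel f) = 0 :=
  ρ.rk_eq_zero_of_isZero (ModuleCat.finitePresentation_cokernel f hA hB)
    (isZero_cokernel_of_epi f)

lemma rk_le_of_epi {A B : ModuleCat.{u} R} (f : A ⟶ B) [Epi f]
    (hA : Module.FinitePresentation R A) (hB : Module.FinitePresentation R B) :
    ρ.rk B ≤ ρ.rk A := by
  simpa [ρ.rk_cokernel_eq_zero_of_epi f hA hB] using ρ.rk_le f hA hB

lemma rk_cokernel_comp_le {A B C : ModuleCat.{u} R} (f : A ⟶ B) (g : B ⟶ C)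
    (hA : Module.FinitePresentation R A) (hB : Module.FinitePresentation R B)
    (hC : Module.FinitePresentation R C) :
    ρ.rk (cokernel (f ≫ g)) ≤ ρ.rk (cokernel f) + ρ.rk (cokernel g) := by
  have hf := ModuleCat.finitePresentation_cokernel f hA hB
  have hfg := ModuleCat.finitePresentation_cokernel (f ≫ g) hA hC
  have hφ : f ≫ g ≫ cokernel.π (f ≫ g) = 0 := by rw [← Category.assoc, cokernel.condition]
  let φ : cokernel f ⟶ cokernel (f ≫ g) := cokernel.desc f _ hφ
  let ψ : cokernel g ⟶ cokernel φ := cokernel.desc g (cokernel.π (f ≫ g) ≫ cokernel.π φ) (by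
    rw [← Category.assoc, ← cokernel.π_desc f _ hφ, Category.assoc, cokernel.condition,
      comp_zero])
  have : Epi ψ := epi_of_epi_fac (cokernel.π_desc _ _ _)
  calc ρ.rk (cokernel (f ≫ g)) ≤ ρ.rk (cokernel f) + ρ.rk (cokernel φ) := ρ.rk_le φ hf hfg
    _ ≤ ρ.rk (cokernel f) + ρ.rk (cokernel g) := by
      gcongr
      exact ρ.rk_le_of_epi ψ (ModuleCat.finitePresentation_cokernel g hB hC)
        (ModuleCat.finitePresentation_cokernel φ hf hfg)

lemma rk_cokernel_pushoutAlong_le {A B C : ModuleCat.{u} R} (s : A ⟶ B) (a : A ⟶ C)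
    (hA : Module.FinitePresentation R A) (hB : Module.FinitePresentation R B)
    (hC : Module.FinitePresentation R C) :
    ρ.rk (cokernel (pushoutAlong s a)) ≤ ρ.rk (cokernel s) := by
  let q := cokernel.π (biprod.lift s a) ≫ cokernel.π (pushoutAlong s a)
  have hinr : biprod.inr ≫ q = 0 :=
    (Category.assoc _ _ _).symm.trans (cokernel.condition (pushoutAlong s a))
  have hq : biprod.fst ≫ biprod.inl ≫ q = q := by
    conv_rhs => rw [← Category.id_comp q, ← biprod.total]
    simp only [Preadditive.add_comp, Category.assoc, hinr, comp_zero, add_zero]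
  have hs : s ≫ biprod.inl ≫ q = 0 :=
    calc s ≫ biprod.inl ≫ q = (s ≫ biprod.inl + a ≫ biprod.inr) ≫ q := by
          simp only [Preadditive.add_comp, Category.assoc, hinr, comp_zero, add_zero]
      _ = biprod.lift s a ≫ q := congrArg (· ≫ q) biprod.lift_eq.symm
      _ = 0 := by simp [q]
  have : Epi (biprod.inl ≫ q) := epi_of_epi_fac hq
  have : Epi (cokernel.desc s _ hs) := epi_of_epi_fac (cokernel.π_desc _ _ _)
  have hD := ModuleCat.finitePresentation_cokernel (biprod.lift s a) hA
    (ModuleCat.finitePresentation_biprod hB hC)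
  exact ρ.rk_le_of_epi (cokernel.desc s _ hs) (ModuleCat.finitePresentation_cokernel s hA hB)
    (ModuleCat.finitePresentation_cokernel _ hC hD)

lemma isRhoFull_of_isIso {A B : ModuleCat.{u} R} (f : A ⟶ B) [IsIso f]
    (hA : Module.FinitePresentation R A) (hB : Module.FinitePresentation R B) :
    ρ.IsRhoFull f :=
  ⟨ρ.rk_iso hA hB (asIso f), ρ.rk_cokernel_eq_zero_of_epi f hA hB⟩

variable {ρ}

lemma IsRhoFull.comp {A B C : ModuleCat.{u} R} {f : A ⟶ B} {g : B ⟶ C}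
    (hf : ρ.IsRhoFull f) (hg : ρ.IsRhoFull g) (hA : Module.FinitePresentation R A)
    (hB : Module.FinitePresentation R B) (hC : Module.FinitePresentation R C) :
    ρ.IsRhoFull (f ≫ g) := by
  have := ρ.rk_cokernel_comp_le f g hA hB hC
  exact ⟨hf.1.trans hg.1, by rw [hf.2, hg.2] at this; omega⟩

lemma IsRhoFull.pushoutAlong {A B C : ModuleCat.{u} R} {s : A ⟶ B} (hs : ρ.IsRhoFull s)
    (a : A ⟶ C) (hA : Module.FinitePresentation R A) (hB : Module.FinitePresentation R B)
    (hC : Module.FinitePresentation R C) :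
    ρ.IsRhoFull (_root_.pushoutAlong s a) := by
  have hBC := ModuleCat.finitePresentation_biprod hB hC
  have hcoker : ρ.rk (cokernel (_root_.pushoutAlong s a)) = 0 := by
    have := ρ.rk_cokernel_pushoutAlong_le s a hA hB hC
    rwa [hs.2, Nat.le_zero] at this
  have hrk := hs.1
  have hsum := ρ.rk_biprod B C hB hC
  have hlift := ρ.rk_le (biprod.lift s a) hA hBC
  have hpush := ρ.rk_le (_root_.pushoutAlong s a) hC
    (ModuleCat.finitePresentation_cokernel (biprod.lift s a) hA hBC)
  exact ⟨by rw [hcoker] at hpush; omega, hcoker⟩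

lemma IsRhoFull.cokernel_π {A B C : ModuleCat.{u} R} {s : A ⟶ B} {a : B ⟶ C}
    (hs : ρ.IsRhoFull s) (w : s ≫ a = 0) (hA : Module.FinitePresentation R A)
    (hB : Module.FinitePresentation R B) (hC : Module.FinitePresentation R C) :
    ρ.IsRhoFull (cokernel.π a) := by
  have hsa := ModuleCat.finitePresentation_cokernel (s ≫ a) hA hC
  let e : cokernel (s ≫ a) ⟶ C := cokernel.desc _ (𝟙 C) (by rw [w, zero_comp])
  have : Epi e := epi_of_epi_fac (cokernel.π_desc _ _ _)
  have hle := ρ.rk_le_of_epi e hsa hC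
  have hcomp := ρ.rk_cokernel_comp_le s a hA hB hC
  have hcoker := ρ.rk_coker_le a hB hC
  exact ⟨by rw [hs.2] at hcomp; omega,
    ρ.rk_cokernel_eq_zero_of_epi _ hC (ModuleCat.finitePresentation_cokernel a hB hC)⟩

end SylvesterRankFP

/-- The set of `ρ`-full maps between finitely presented `R`-modules is a severe right
Ore set: it contains all isomorphisms, is closed under composition and pushouts, and is
severely right revengeful. -/
theorem rhoFull_severe_right_ore {R : Type u} [Ring R] (ρ : SylvesterRankFP R) :
    (∀ ⦃A B : ModuleCat.{u} R⦄,
      Module.FinitePresentation R A → Module.FinitePresentation R B →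
      ∀ (f : A ⟶ B), IsIso f → ρ.IsRhoFull f) ∧
    (∀ ⦃A B B' : ModuleCat.{u} R⦄,
      Module.FinitePresentation R A → Module.FinitePresentation R B →
      Module.FinitePresentation R B' →
      ∀ (f : A ⟶ B) (g : B ⟶ B'),
      ρ.IsRhoFull f → ρ.IsRhoFull g → ρ.IsRhoFull (f ≫ g)) ∧
    (∀ ⦃A B C' : ModuleCat.{u} R⦄,
      Module.FinitePresentation R A → Module.FinitePresentation R B →
      Module.FinitePresentation R C' →
      ∀ (s : A ⟶ B) (a : A ⟶ C'),
      ρ.IsRhoFull s → ρ.IsRhoFull (pushoutAlong s a)) ∧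
    (∀ ⦃A B C' : ModuleCat.{u} R⦄,
      Module.FinitePresentation R A → Module.FinitePresentation R B →
      Module.FinitePresentation R C' →
      ∀ (s : A ⟶ B) (a : B ⟶ C'),
      ρ.IsRhoFull s → s ≫ a = 0 → ρ.IsRhoFull (cokernel.π a)) := by
  refine ⟨fun _ _ hA hB f _ ↦ ρ.isRhoFull_of_isIso f hA hB,
    fun _ _ _ hA hB hB' _ _ hf hg ↦ hf.comp hg hA hB hB',
    fun _ _ _ hA hB hC' _ a hs ↦ hs.pushoutAlong a hA hB hC',
    fun _ _ _ hA hB hC' _ _ hs w ↦ hs.cokernel_π w hA hB hC'⟩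
end

section
/- Let ρ be a Sylvester rank function on the category of finitely presented right R-modules with ρ(R) = 1. Let α : R → M be a map with ρ(α) = 0 (i.e. ρ(M) = ρ(coker α)) and β : L → M any map. Then ρ((β, α) : L ⊕ R → M) = ρ(β), where ρ of a map φ : A → B is defined as ρ(B) − ρ(coker φ). -/
open CategoryTheory CategoryTheory.Limits

universe u

/-!
Write `A = im β` and `B = im α`, so that `coker β = M/A`, `coker α = M/B` and
`coker (β, α) = M/(A + B)`. Since `M/(A + B)` is a quotient of `M/A` by a finitely generated
submodule, `ρ(M/(A + B)) ≤ ρ(M/A)`. Conversely, the pushout square gives an exact sequence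
`M → M/A ⊕ M/B → M/(A + B) → 0`, whence `ρ(M/A) + ρ(M/B) ≤ ρ(M) + ρ(M/(A + B))`; as
`ρ(M/B) = ρ(M)`, this is the reverse inequality.
-/

namespace Submodule

variable {R M : Type*} [Ring R] [AddCommGroup M] [Module R M]

def quotientProdToQuotientSup (A B : Submodule R M) : (M ⧸ A) × (M ⧸ B) →ₗ[R] M ⧸ (A ⊔ B) :=
  (factor le_sup_left).coprod (-factor le_sup_right)

theorem quotientProdToQuotientSup_surjective (A B : Submodule R M) :
    Function.Surjective (quotientProdToQuotientSup A B) := by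
  intro z
  obtain ⟨x, rfl⟩ := (A ⊔ B).mkQ_surjective z
  exact ⟨(A.mkQ x, 0), by simp [quotientProdToQuotientSup]⟩

theorem exact_mkQ_prod_quotientProdToQuotientSup (A B : Submodule R M) :
    Function.Exact (A.mkQ.prod B.mkQ) (quotientProdToQuotientSup A B) := by
  rintro ⟨x, y⟩
  obtain ⟨x, rfl⟩ := A.mkQ_surjective x
  obtain ⟨y, rfl⟩ := B.mkQ_surjective y
  have hφ : quotientProdToQuotientSup A B (A.mkQ x, B.mkQ y) = (A ⊔ B).mkQ (x - y) := by
    simp [quotientProdToQuotientSup, sub_eq_add_neg]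
  rw [hφ, mkQ_apply, Quotient.mk_eq_zero]
  constructor
  · intro hxy
    obtain ⟨a, ha, b, hb, hab⟩ := mem_sup.mp hxy
    refine ⟨x - a, Prod.ext ((Quotient.eq _).mpr ?_) ((Quotient.eq _).mpr ?_)⟩
    · simpa using neg_mem ha
    · rwa [show x - a - y = b by rw [sub_right_comm, ← hab]; abel]
  · rintro ⟨z, hz⟩
    obtain ⟨hzx, hzy⟩ := Prod.ext_iff.mp hz
    rw [show x - y = -(z - x) + (z - y) by abel]
    exact add_mem (neg_mem (mem_sup_left ((Quotient.eq _).mp hzx)))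
      (mem_sup_right ((Quotient.eq _).mp hzy))

end Submodule

theorem Module.FinitePresentation.quotient {R M : Type*} [Ring R] [AddCommGroup M] [Module R M]
    [Module.FinitePresentation R M] {N : Submodule R M} (hN : N.FG) :
    Module.FinitePresentation R (M ⧸ N) :=
  Module.finitePresentation_of_surjective N.mkQ N.mkQ_surjective (by rwa [Submodule.ker_mkQ])

theorem ModuleCat.range_biprod_desc {R : Type u} [Ring R] {L N M : ModuleCat.{u} R}
    (β : L ⟶ M) (α : N ⟶ M) :
    LinearMap.range (biprod.desc β α).hom = LinearMap.range β.hom ⊔ LinearMap.range α.hom := by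
  have : (biprodIsoProd L N).inv ≫ biprod.desc β α = ofHom (β.hom.coprod α.hom) := by
    rw [biprod.desc_eq, Preadditive.comp_add, ← Category.assoc, ← Category.assoc,
      biprodIsoProd_inv_comp_fst, biprodIsoProd_inv_comp_snd]
    ext <;> simp
  rw [← LinearMap.range_coprod, ← ModuleCat.hom_ofHom (β.hom.coprod α.hom), ← this,
    ModuleCat.hom_comp, LinearMap.range_comp_of_range_eq_top]
  exact (biprodIsoProd L N).symm.toLinearEquiv.range

instance ModuleCat.finite_biprod {R : Type u} [Ring R] (L N : ModuleCat.{u} R)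
    [Module.Finite R L] [Module.Finite R N] : Module.Finite R ↑(L ⊞ N : ModuleCat.{u} R) :=
  .equiv (ModuleCat.biprodIsoProd L N).symm.toLinearEquiv

namespace SylvesterRankFP

variable {R : Type u} [Ring R] (ρ : SylvesterRankFP R)

section Quotients

variable {M N : Type u} [AddCommGroup M] [Module R M] [AddCommGroup N] [Module R N]

theorem rk_congr [Module.FinitePresentation R M] (e : M ≃ₗ[R] N) :
    ρ.rk (ModuleCat.of R M) = ρ.rk (ModuleCat.of R N) :=
  have : Module.FinitePresentation R N := .of_equiv e
  ρ.rk_iso inferInstance inferInstance e.toModuleIso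

theorem rk_prod [Module.FinitePresentation R M] [Module.FinitePresentation R N] :
    ρ.rk (ModuleCat.of R (M × N)) = ρ.rk (ModuleCat.of R M) + ρ.rk (ModuleCat.of R N) := by
  rw [← ρ.rk_biprod _ _ inferInstance inferInstance,
    ρ.rk_congr (ModuleCat.biprodIsoProd (.of R M) (.of R N)).symm.toLinearEquiv]

theorem rk_cokernel {A B : ModuleCat.{u} R} [Module.Finite R A] [Module.FinitePresentation R B]
    (f : A ⟶ B) : ρ.rk (cokernel f) = ρ.rk (ModuleCat.of R (B ⧸ LinearMap.range f.hom)) := by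
  have : Module.FinitePresentation R (B ⧸ LinearMap.range f.hom) :=
    .quotient (Submodule.fg_range f.hom)
  exact (ρ.rk_congr (ModuleCat.cokernelIsoRangeQuotient f).toLinearEquiv.symm).symm

theorem rk_quotient_le [Module.FinitePresentation R M] {N : Submodule R M} (hN : N.FG) :
    ρ.rk (ModuleCat.of R (M ⧸ N)) ≤ ρ.rk (ModuleCat.of R M) := by
  have : Module.Finite R N := Module.Finite.iff_fg.mpr hN
  obtain ⟨n, g, hg⟩ := Module.Finite.exists_fin' R N
  let f : ModuleCat.of R (Fin n → R) ⟶ ModuleCat.of R M := ModuleCat.ofHom (N.subtype ∘ₗ g)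
  have hf : LinearMap.range f.hom = N := by
    rw [ModuleCat.hom_ofHom, LinearMap.range_comp, LinearMap.range_eq_top.mpr hg,
      Submodule.map_top, Submodule.range_subtype]
  calc ρ.rk (ModuleCat.of R (M ⧸ N)) = ρ.rk (cokernel f) := by rw [ρ.rk_cokernel, hf]
    _ ≤ ρ.rk (ModuleCat.of R M) := ρ.rk_coker_le f inferInstance inferInstance

theorem rk_quotient_sup_le [Module.FinitePresentation R M] {A B : Submodule R M} (hA : A.FG)
    (hB : B.FG) : ρ.rk (ModuleCat.of R (M ⧸ (A ⊔ B))) ≤ ρ.rk (ModuleCat.of R (M ⧸ A)) := by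
  have : Module.FinitePresentation R (M ⧸ A) := .quotient hA
  have : Module.FinitePresentation R ((M ⧸ A) ⧸ B.map A.mkQ) := .quotient (hB.map _)
  calc ρ.rk (ModuleCat.of R (M ⧸ (A ⊔ B)))
      = ρ.rk (ModuleCat.of R ((M ⧸ A) ⧸ B.map A.mkQ)) :=
        (ρ.rk_congr (Submodule.quotientQuotientEquivQuotientSup A B)).symm
    _ ≤ ρ.rk (ModuleCat.of R (M ⧸ A)) := ρ.rk_quotient_le (hB.map _)

theorem rk_quotient_add_rk_quotient_le [Module.FinitePresentation R M] {A B : Submodule R M}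
    (hA : A.FG) (hB : B.FG) :
    ρ.rk (ModuleCat.of R (M ⧸ A)) + ρ.rk (ModuleCat.of R (M ⧸ B)) ≤
      ρ.rk (ModuleCat.of R M) + ρ.rk (ModuleCat.of R (M ⧸ (A ⊔ B))) := by
  have : Module.FinitePresentation R (M ⧸ A) := .quotient hA
  have : Module.FinitePresentation R (M ⧸ B) := .quotient hB
  have : Module.FinitePresentation R (M ⧸ (A ⊔ B)) := .quotient (hA.sup hB)
  let ψ : ModuleCat.of R M ⟶ ModuleCat.of R ((M ⧸ A) × (M ⧸ B)) :=
    ModuleCat.ofHom (A.mkQ.prod B.mkQ)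
  have e := (Submodule.exact_mkQ_prod_quotientProdToQuotientSup A B).linearEquivOfSurjective
    (Submodule.quotientProdToQuotientSup_surjective A B)
  calc ρ.rk (ModuleCat.of R (M ⧸ A)) + ρ.rk (ModuleCat.of R (M ⧸ B))
      = ρ.rk (ModuleCat.of R ((M ⧸ A) × (M ⧸ B))) := ρ.rk_prod.symm
    _ ≤ ρ.rk (ModuleCat.of R M) + ρ.rk (cokernel ψ) := ρ.rk_le ψ inferInstance inferInstance
    _ = ρ.rk (ModuleCat.of R M) + ρ.rk (ModuleCat.of R (M ⧸ (A ⊔ B))) := by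
      rw [ρ.rk_cokernel ψ]
      exact congrArg (_ + ·) (ρ.rk_congr e.symm).symm

end Quotients

variable {L N M : ModuleCat.{u} R} [Module.Finite R L] [Module.Finite R N]
  [Module.FinitePresentation R M] (β : L ⟶ M) (α : N ⟶ M)

theorem rk_cokernel_desc_le : ρ.rk (cokernel (biprod.desc β α)) ≤ ρ.rk (cokernel β) := by
  rw [ρ.rk_cokernel, ρ.rk_cokernel, ModuleCat.range_biprod_desc]
  exact ρ.rk_quotient_sup_le (Submodule.fg_range _) (Submodule.fg_range _)

theorem rk_cokernel_add_rk_cokernel_le :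
    ρ.rk (cokernel β) + ρ.rk (cokernel α) ≤ ρ.rk M + ρ.rk (cokernel (biprod.desc β α)) := by
  rw [ρ.rk_cokernel, ρ.rk_cokernel, ρ.rk_cokernel, ModuleCat.range_biprod_desc]
  exact ρ.rk_quotient_add_rk_quotient_le (Submodule.fg_range _) (Submodule.fg_range _)

end SylvesterRankFP

theorem rank_desc_eq_rank_of_rank_zero_general {R : Type u} [Ring R] (ρ : SylvesterRankFP R)
    {L M : ModuleCat.{u} R}
    (hL : Module.FinitePresentation R L) (hM : Module.FinitePresentation R M)
    (α : ModuleCat.of R R ⟶ M) (hα : ρ.rk (cokernel α) = ρ.rk M)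
    (β : L ⟶ M) :
    ρ.rk M - ρ.rk (cokernel (biprod.desc β α)) = ρ.rk M - ρ.rk (cokernel β) := by
  have hle := ρ.rk_cokernel_desc_le β α
  have hge := ρ.rk_cokernel_add_rk_cokernel_le β α
  omega

/-- Let `ρ` be a Sylvester rank function on finitely presented right `R`-modules with
`ρ(R) = 1`.  If `α : R → M` has `ρ(α) = 0` (i.e. `ρ(coker α) = ρ(M)`) and `β : L → M` is
any map, then `ρ((β, α) : L ⊕ R → M) = ρ(β)`, where `ρ(φ : A ⟶ B) = ρ(B) - ρ(coker φ)`. -/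
theorem rank_desc_eq_rank_of_rank_zero {R : Type u} [Ring R] (ρ : SylvesterRankFP R)
    (hR : ρ.rk (ModuleCat.of R R) = 1)
    {L M : ModuleCat.{u} R}
    (hL : Module.FinitePresentation R L) (hM : Module.FinitePresentation R M)
    (α : ModuleCat.of R R ⟶ M) (hα : ρ.rk (cokernel α) = ρ.rk M)
    (β : L ⟶ M) :
    ρ.rk M - ρ.rk (cokernel (biprod.desc β α)) = ρ.rk M - ρ.rk (cokernel β) :=
  rank_desc_eq_rank_of_rank_zero_general ρ hL hM α hα β
end

section
/- Let R be a ring and D a division ring. Any right exact additive functor φ from finitely presented right R-modules to finite-dimensional right D-vector spaces gives rise to a Sylvester rank function via ρ(A) = dim_D φ(A): ρ is additive on direct sums and satisfies ρ(C) ≤ ρ(B) ≤ ρ(A) + ρ(C) for every exact sequence A → B → C → 0. -/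
open CategoryTheory CategoryTheory.Limits Module

universe u

/-! Right exactness of `Φ` turns `A → B → coker f → 0` into an exact sequence of
finite-dimensional vector spaces `Φ A → Φ B → Φ (coker f) → 0`, on which both inequalities are
rank–nullity; additivity on direct sums holds because additive functors preserve biproducts. -/

theorem Function.Exact.finrank_le_and_le_add_of_surjective {D X Y Z : Type*} [DivisionRing D]
    [AddCommGroup X] [Module D X] [AddCommGroup Y] [Module D Y] [AddCommGroup Z] [Module D Z]
    [Module.Finite D X] [Module.Finite D Y] {f : X →ₗ[D] Y} {g : Y →ₗ[D] Z}
    (hfg : Function.Exact f g) (hg : Function.Surjective g) :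
    finrank D Z ≤ finrank D Y ∧ finrank D Y ≤ finrank D X + finrank D Z := by
  have rank_nullity := g.finrank_range_add_finrank_ker
  rw [LinearMap.range_eq_top.mpr hg, finrank_top, hfg.linearMap_ker_eq] at rank_nullity
  have := f.finrank_range_le
  omega

theorem ModuleCat.finrank_biprod {D : Type u} [DivisionRing D] (X Y : ModuleCat.{u} D)
    [Module.Finite D X] [Module.Finite D Y] :
    finrank D ↑(X ⊞ Y) = finrank D X + finrank D Y :=
  (biprodIsoProd X Y).toLinearEquiv.finrank_eq.trans finrank_prod

theorem ModuleCat.finrank_le_and_le_add_of_isCokernel {D : Type u} [DivisionRing D]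
    {X Y Z : ModuleCat.{u} D} [Module.Finite D X] [Module.Finite D Y] {f : X ⟶ Y} {g : Y ⟶ Z}
    (w : f ≫ g = 0) (hg : IsColimit (CokernelCofork.ofπ g w)) :
    finrank D Z ≤ finrank D Y ∧ finrank D Y ≤ finrank D X + finrank D Z := by
  have hexact := (ShortComplex.ShortExact.moduleCat_exact_iff_function_exact _).mp
    (ShortComplex.exact_of_g_is_cokernel (ShortComplex.mk f g w) hg)
  have hsurj : Function.Surjective g :=
    (ModuleCat.epi_iff_surjective g).mp (epi_of_isColimit_cofork hg)
  exact hexact.finrank_le_and_le_add_of_surjective hsurj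

theorem CategoryTheory.Functor.finrank_obj_biprod {C : Type*} [Category C] [Preadditive C]
    [HasBinaryBiproducts C] {D : Type u} [DivisionRing D] (Φ : C ⥤ ModuleCat.{u} D) [Φ.Additive]
    (A B : C) [Module.Finite D (Φ.obj A)] [Module.Finite D (Φ.obj B)] :
    finrank D (Φ.obj (A ⊞ B)) = finrank D (Φ.obj A) + finrank D (Φ.obj B) := by
  have := preservesBinaryBiproducts_of_preservesBiproducts Φ
  rw [(Φ.mapBiprod A B).toLinearEquiv.finrank_eq, ModuleCat.finrank_biprod]

/-- Let `D` be a division ring and `Φ` a right exact additive functor from finitely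
presented right `R`-modules to finite-dimensional `D`-vector spaces.  Then
`ρ(A) = dim_D Φ(A)` is a Sylvester rank function: it is additive on direct sums and
satisfies `ρ(coker f) ≤ ρ(B) ≤ ρ(A) + ρ(coker f)` for every map `f : A ⟶ B`, i.e.
`ρ(C) ≤ ρ(B) ≤ ρ(A) + ρ(C)` for every exact sequence `A → B → C → 0`. -/
theorem sylvester_of_right_exact_to_vec
    {R : Type u} [Ring R] {D : Type u} [DivisionRing D]
    (Φ : ModuleCat.{u} R ⥤ ModuleCat.{u} D) [Φ.Additive]
    (hfin : ∀ (M : ModuleCat.{u} R), Module.FinitePresentation R M →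
      Module.Finite D (Φ.obj M))
    (hre : ∀ ⦃A B : ModuleCat.{u} R⦄ (f : A ⟶ B),
      Module.FinitePresentation R A → Module.FinitePresentation R B →
      Nonempty (IsColimit (CokernelCofork.ofπ (f := Φ.map f) (Φ.map (cokernel.π f))
        (by rw [← Φ.map_comp, cokernel.condition, Functor.map_zero])))) :
    (∀ (A B : ModuleCat.{u} R), Module.FinitePresentation R A →
      Module.FinitePresentation R B →
      Module.finrank D (Φ.obj (A ⊞ B)) =
        Module.finrank D (Φ.obj A) + Module.finrank D (Φ.obj B)) ∧
    (∀ ⦃A B : ModuleCat.{u} R⦄ (f : A ⟶ B),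
      Module.FinitePresentation R A → Module.FinitePresentation R B →
      Module.finrank D (Φ.obj (cokernel f)) ≤ Module.finrank D (Φ.obj B) ∧
      Module.finrank D (Φ.obj B) ≤
        Module.finrank D (Φ.obj A) + Module.finrank D (Φ.obj (cokernel f))) := by
  refine ⟨fun A B hA hB => ?_, fun A B f hA hB => ?_⟩
  · have := hfin A hA
    have := hfin B hB
    exact Φ.finrank_obj_biprod A B
  · have := hfin A hA
    have := hfin B hB
    exact ModuleCat.finrank_le_and_le_add_of_isCokernel _ (hre f hA hB).some
end

section
/- Let σ be a right Ore set in a small additive category A with cokernels. If b : B → C is the cokernel of a : A → B in A, then the image of b in the localized category A_σ is the cokernel of the image of a. Consequently A_σ has cokernels and the localization functor A → A_σ is right exact. -/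
/-!
A right Ore set in a preadditive category is a left calculus of fractions, so a morphism
`L.obj X ⟶ L.obj Y` is `L.map h ≫ (L.map s)⁻¹` with `s ∈ W`, and `L.map h = 0` iff `h ≫ t = 0`
for some `t ∈ W`. Hence if such a morphism is killed by `L.map g`, enlarging `s` lets one
choose `h` with `g ≫ h = 0`. For a cokernel `π` of `a`, a morphism killed by `L.map a` then has
a numerator factoring through `π`, and a morphism killed by `L.map π` has numerator `0`, so
`L.map π` is an epimorphism through which the descent exists. Every arrow of the localized
category is isomorphic to the image of an arrow of `C`, so cokernels exist there too.
-/

open CategoryTheory CategoryTheory.Limits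

universe v v' u u'

namespace CategoryTheory

lemma Limits.hasCokernel_of_arrow_iso {D : Type u'} [Category.{v'} D] [HasZeroMorphisms D]
    {X Y X' Y' : D} {f : X ⟶ Y} {g : X' ⟶ Y'} [HasCokernel f] (e : Arrow.mk f ≅ Arrow.mk g) :
    HasCokernel g := by
  have : HasCokernel (f ≫ e.hom.right) := hasCokernel_comp_iso _ _
  have : HasCokernel (e.inv.left ≫ f ≫ e.hom.right) := hasCokernel_epi_comp _ _
  rwa [← Arrow.iso_w' e] at this

variable {C : Type u} [Category.{v} C] [Preadditive C] (W : MorphismProperty C)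

lemma MorphismProperty.hasLeftCalculusOfFractions_of_ore [W.IsMultiplicative]
    (hore : ∀ ⦃A B C' : C⦄ (s : A ⟶ B) (_ : W s) (a : A ⟶ C'),
      ∃ (D' : C) (t : C' ⟶ D') (_ : W t) (b : B ⟶ D'), a ≫ t = s ≫ b)
    (hrev : ∀ ⦃A B C' : C⦄ (s : A ⟶ B) (a : B ⟶ C'), W s → s ≫ a = 0 →
      ∃ (D' : C) (t : C' ⟶ D'), W t ∧ a ≫ t = 0) :
    W.HasLeftCalculusOfFractions where
  exists_leftFraction X Y φ := by
    obtain ⟨_, t, ht, b, fac⟩ := hore φ.s φ.hs φ.f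
    exact ⟨⟨b, t, ht⟩, fac⟩
  ext X' X Y f₁ f₂ s hs eq := by
    obtain ⟨Y', t, ht, fac⟩ := hrev s (f₁ - f₂) hs (by rw [Preadditive.comp_sub, eq, sub_self])
    exact ⟨Y', t, ht, by rwa [Preadditive.sub_comp, sub_eq_zero] at fac⟩

namespace Localization

variable [W.HasLeftCalculusOfFractions] {D : Type u'} [Category.{v'} D] [Preadditive D]
  (L : C ⥤ D) [L.IsLocalization W] [L.Additive]
include W L

lemma map_eq_zero_iff {X Y : C} (f : X ⟶ Y) :
    L.map f = 0 ↔ ∃ (Z : C) (s : Y ⟶ Z), W s ∧ f ≫ s = 0 := by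
  rw [← L.map_zero, MorphismProperty.map_eq_iff_postcomp L W]
  simp only [zero_comp, exists_prop]

lemma exists_fac_of_map_comp_eq_zero {X' X Y : C} (g : X' ⟶ X) (f : L.obj X ⟶ L.obj Y)
    (hf : L.map g ≫ f = 0) :
    ∃ (Y' : C) (h : X ⟶ Y') (s : Y ⟶ Y'), W s ∧ g ≫ h = 0 ∧ f ≫ L.map s = L.map h := by
  obtain ⟨φ, rfl⟩ := exists_leftFraction L W f
  have fac := φ.map_comp_map_s L (inverts L W)
  have : L.map (g ≫ φ.f) = 0 := by rw [L.map_comp, ← fac, reassoc_of% hf, zero_comp]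
  obtain ⟨Y', t, ht, hgt⟩ := (map_eq_zero_iff W L _).1 this
  refine ⟨Y', φ.f ≫ t, φ.s ≫ t, W.comp_mem _ _ φ.hs ht, by rwa [← Category.assoc], ?_⟩
  rw [L.map_comp, reassoc_of% fac, L.map_comp]

variable {A B Q : C} {a : A ⟶ B} {π : B ⟶ Q} {w : a ≫ π = 0}
  (hc : IsColimit (CokernelCofork.ofπ π w))
include hc

lemma exists_desc_of_isColimit_cokernelCofork {Y : C} (f : L.obj B ⟶ L.obj Y)
    (hf : L.map a ≫ f = 0) : ∃ l, L.map π ≫ l = f := by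
  obtain ⟨Y', h, s, hs, ha, fac⟩ := exists_fac_of_map_comp_eq_zero W L a f hf
  have := inverts L W s hs
  obtain ⟨l, hl⟩ := CokernelCofork.IsColimit.desc' hc h ha
  refine ⟨L.map l ≫ inv (L.map s), ?_⟩
  rw [← L.map_comp_assoc, show π ≫ l = h from hl, ← fac, Category.assoc, IsIso.hom_inv_id,
    Category.comp_id]

lemma eq_zero_of_map_comp_eq_zero_of_isColimit_cokernelCofork {Y : C} (f : L.obj Q ⟶ L.obj Y)
    (hf : L.map π ≫ f = 0) : f = 0 := by
  obtain ⟨Y', h, s, hs, hπ, fac⟩ := exists_fac_of_map_comp_eq_zero W L π f hf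
  have := inverts L W s hs
  have : Epi π := Cofork.IsColimit.epi hc
  rw [← cancel_mono (L.map s), fac, zero_of_epi_comp π hπ, L.map_zero, zero_comp]

lemma epi_map_of_isColimit_cokernelCofork : Epi (L.map π) := by
  have := essSurj L W
  refine Preadditive.epi_of_cancel_zero _ fun {Z} u hu => ?_
  have := eq_zero_of_map_comp_eq_zero_of_isColimit_cokernelCofork W L hc
    (u ≫ (L.objObjPreimageIso Z).inv) (by rw [reassoc_of% hu, zero_comp])
  simpa using this

noncomputable def isColimitMapCokernelCofork :
    IsColimit (CokernelCofork.ofπ (f := L.map a) (L.map π)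
      (by rw [← L.map_comp, w, L.map_zero])) :=
  have := essSurj L W
  have := epi_map_of_isColimit_cokernelCofork W L hc
  CokernelCofork.IsColimit.ofπ' _ _ fun {Z} k hk =>
    let e := L.objObjPreimageIso Z
    have hl := exists_desc_of_isColimit_cokernelCofork W L hc (k ≫ e.inv)
      (by rw [reassoc_of% hk, zero_comp])
    ⟨hl.choose ≫ e.hom, by simp [reassoc_of% hl.choose_spec]⟩

omit hc

lemma hasCokernels [HasCokernels C] : HasCokernels D where
  has_colimit {X Y} f := by
    have := essSurj_mapArrow L W
    obtain ⟨g, ⟨e⟩⟩ := Functor.EssSurj.mem_essImage (F := L.mapArrow) (Arrow.mk f)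
    have : HasCokernel (L.map g.hom) :=
      ⟨⟨⟨_, isColimitMapCokernelCofork W L (w := cokernel.condition _)
        (cokernelIsCokernel g.hom)⟩⟩⟩
    exact hasCokernel_of_arrow_iso e

end Localization

end CategoryTheory

/-- Let `σ` (here `W`) be a right Ore set in an additive category `C` with cokernels:
it contains all isomorphisms, is closed under composition, has common right multiples,
and is right revengeful.  Let `L : C ⥤ D` be the localization of `C` at `W` (which is an
additive category).  Then the image under `L` of the cokernel map of any `a : A ⟶ B` is
again a cokernel of `L.map a`; consequently the localized category has cokernels and the
localization functor is right exact. -/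
theorem localization_right_exact_and_hasCokernels
    {C : Type u} [Category.{v} C] [Preadditive C] [HasCokernels C]
    (W : MorphismProperty C) [W.IsMultiplicative]
    (hore : ∀ ⦃A B C' : C⦄ (s : A ⟶ B) (_ : W s) (a : A ⟶ C'),
      ∃ (D' : C) (t : C' ⟶ D') (_ : W t) (b : B ⟶ D'), a ≫ t = s ≫ b)
    (hrev : ∀ ⦃A B C' : C⦄ (s : A ⟶ B) (a : B ⟶ C'), W s → s ≫ a = 0 →
      ∃ (D' : C) (t : C' ⟶ D'), W t ∧ a ≫ t = 0)
    {D : Type u'} [Category.{v'} D] (L : C ⥤ D) [L.IsLocalization W]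
    [Preadditive D] [L.Additive] :
    HasCokernels D ∧
    ∀ ⦃A B : C⦄ (a : A ⟶ B),
      Nonempty (IsColimit (CokernelCofork.ofπ (f := L.map a) (L.map (cokernel.π a))
        (by rw [← L.map_comp, cokernel.condition, Functor.map_zero]))) := by
  have := W.hasLeftCalculusOfFractions_of_ore hore hrev
  exact ⟨Localization.hasCokernels W L,
    fun _ _ a => ⟨Localization.isColimitMapCokernelCofork W L (w := cokernel.condition a)
      (cokernelIsCokernel a)⟩⟩
end

section
/- Let σ be a severe right Ore set in the category of finitely presented right R-modules, and for M finitely presented let M_σ = colim_{s ∈ σ, dom(s)=M} codom(s) over the directed system of maps in σ starting at M (with morphisms given by maps t ∈ σ with s ∘ t in the system). Then for finitely presented M, N, the natural map λ : colim_{t} Hom(M, N_t) → Hom_{A_σ}([M],[N]), f ↦ f ∘ t⁻¹, is a bijection; in particular Hom_R(M, N_σ) ≅ Hom_{A_σ}([M],[N]). -/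
/-!
Pushouts along maps of `σ` give the left Ore condition, and severe revengefulness (applied to
`f₁ - f₂` when `s ≫ f₁ = s ≫ f₂`) gives left cancellability, so `σ` admits a calculus of left
fractions. Hence every morphism `[M] ⟶ [N]` of the localization is a fraction `f ∘ t⁻¹`. For
injectivity, a pushout square of `t₁` and `t₂` with both legs in `σ` rewrites both fractions
over a common denominator; then `L f₁ = L f₂`, which happens exactly when `f₁ ≫ u = f₂ ≫ u`
for some `u ∈ σ`.
-/

open CategoryTheory CategoryTheory.Limits

universe v' u u'

/-- The category of finitely presented right `R`-modules. -/
abbrev FPMod (R : Type u) [Ring R] :=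
  CategoryTheory.ObjectProperty.FullSubcategory (fun M : ModuleCat.{u} R => Module.FinitePresentation R M)

/-- A severe right Ore set in the category of finitely presented right `R`-modules:
it contains all isomorphisms, is closed under composition, is closed under pushouts and
is severely right revengeful (the pushout of `s : A ⟶ B` along `a : A ⟶ C` being the
canonical map out of `C` to the cokernel of `(s a) : A ⟶ B ⊕ C`, which is a pushout
square in the categorical sense). -/
structure SevereOreFP (R : Type u) [Ring R] : Type (u + 1) where
  P : CategoryTheory.MorphismProperty (FPMod R)
  iso_mem : ∀ ⦃A B : FPMod R⦄ (f : A ⟶ B), IsIso f → P f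
  comp_mem : ∀ ⦃A B C : FPMod R⦄ (f : A ⟶ B) (g : B ⟶ C), P f → P g → P (f ≫ g)
  pushout_mem : ∀ ⦃A B C : FPMod R⦄ (s : A ⟶ B) (a : A ⟶ C), P s →
    ∃ (D : FPMod R) (b : B ⟶ D) (s' : C ⟶ D), IsPushout s a b s' ∧ P s'
  revenge : ∀ ⦃A B C : FPMod R⦄ (s : A ⟶ B) (a : B ⟶ C), P s → s ≫ a = 0 →
    ∃ (D : FPMod R) (c : C ⟶ D) (hc : a ≫ c = 0),
      Nonempty (IsColimit (CokernelCofork.ofπ c hc)) ∧ P c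

variable {R : Type u} [Ring R]

/-- The directed system of maps in `σ` with domain `N`. -/
structure SevereOreFP.Idx (σ : SevereOreFP R) (N : FPMod R) : Type (u + 1) where
  cod : FPMod R
  hom : N ⟶ cod
  mem : σ.P hom

/-- The map `λ` sending `f : M ⟶ N_t` (with `t : N ⟶ N_t` in `σ`) to the morphism
`f ∘ t⁻¹ : [M] ⟶ [N]` in the localized category. -/
noncomputable def SevereOreFP.lam (σ : SevereOreFP R)
    {D : Type u'} [Category.{v'} D] (L : FPMod R ⥤ D) [L.IsLocalization σ.P]
    {M N : FPMod R} (t : σ.Idx N) (f : M ⟶ t.cod) : L.obj M ⟶ L.obj N :=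
  have : IsIso (L.map t.hom) := Localization.inverts L σ.P t.hom t.mem
  L.map f ≫ inv (L.map t.hom)

namespace SevereOreFP

variable (σ : SevereOreFP R)

instance : σ.P.IsMultiplicative where
  id_mem _ := σ.iso_mem _ inferInstance
  comp_mem f g hf hg := σ.comp_mem f g hf hg

-- `b` is, up to the canonical isomorphism of pushouts, the pushout of `a` along `s`.
lemma exists_comm_sq_of_mem {A B C : FPMod R} (s : A ⟶ B) (a : A ⟶ C)
    (hs : σ.P s) (ha : σ.P a) :
    ∃ (D : FPMod R) (b : B ⟶ D) (s' : C ⟶ D), s ≫ b = a ≫ s' ∧ σ.P b ∧ σ.P s' := by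
  obtain ⟨D, b, s', h, hs'⟩ := σ.pushout_mem s a hs
  obtain ⟨_, _, a₂, h₂, ha₂⟩ := σ.pushout_mem a s ha
  refine ⟨D, b, s', h.w, ?_, hs'⟩
  rw [← h.inl_isoIsPushout_inv _ _ h₂.flip]
  exact σ.comp_mem _ _ ha₂ (σ.iso_mem _ inferInstance)

instance : σ.P.HasLeftCalculusOfFractions where
  exists_leftFraction := by
    intro X Y φ
    obtain ⟨D, b, s', h, hs'⟩ := σ.pushout_mem φ.s φ.f φ.hs
    exact ⟨⟨b, s', hs'⟩, h.w.symm⟩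
  ext := by
    intro X' X Y f₁ f₂ s hs h
    obtain ⟨E, c, hc, -, hcσ⟩ := σ.revenge s (f₁ - f₂) hs (by rw [Preadditive.comp_sub, h, sub_self])
    exact ⟨E, c, hcσ, sub_eq_zero.mp (by rwa [← Preadditive.sub_comp])⟩

variable {D : Type u'} [Category.{v'} D] (L : FPMod R ⥤ D) [L.IsLocalization σ.P]

lemma lam_comp {M N : FPMod R} (t t' : σ.Idx N) (v : t.cod ⟶ t'.cod) (hv : t.hom ≫ v = t'.hom)
    (f : M ⟶ t.cod) : σ.lam L t' (f ≫ v) = σ.lam L t f := by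
  have := Localization.inverts L σ.P t.hom t.mem
  have := Localization.inverts L σ.P t'.hom t'.mem
  have hLv : L.map v = inv (L.map t.hom) ≫ L.map t'.hom := by
    rw [← hv, L.map_comp, IsIso.inv_hom_id_assoc]
  simp [lam, hLv]

lemma lam_eq_lam_iff {M N : FPMod R} (t : σ.Idx N) (f₁ f₂ : M ⟶ t.cod) :
    σ.lam L t f₁ = σ.lam L t f₂ ↔ L.map f₁ = L.map f₂ := by
  have := Localization.inverts L σ.P t.hom t.mem
  exact cancel_mono _

lemma exists_eq_lam {M N : FPMod R} (g : L.obj M ⟶ L.obj N) :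
    ∃ (t : σ.Idx N) (f : M ⟶ t.cod), g = σ.lam L t f := by
  obtain ⟨φ, hφ⟩ := Localization.exists_leftFraction L σ.P g
  exact ⟨⟨φ.Y', φ.s, φ.hs⟩, φ.f, hφ⟩

lemma exists_mem_of_lam_eq {M N : FPMod R} (t₁ t₂ : σ.Idx N) (f₁ : M ⟶ t₁.cod)
    (f₂ : M ⟶ t₂.cod) (h : σ.lam L t₁ f₁ = σ.lam L t₂ f₂) :
    ∃ (D' : FPMod R) (u₁ : t₁.cod ⟶ D') (u₂ : t₂.cod ⟶ D'),
      σ.P u₁ ∧ σ.P u₂ ∧ t₁.hom ≫ u₁ = t₂.hom ≫ u₂ ∧ f₁ ≫ u₁ = f₂ ≫ u₂ := by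
  obtain ⟨X, v₁, v₂, hv, hv₁, hv₂⟩ := σ.exists_comm_sq_of_mem t₁.hom t₂.hom t₁.mem t₂.mem
  let t : σ.Idx N := ⟨X, t₁.hom ≫ v₁, σ.comp_mem _ _ t₁.mem hv₁⟩
  rw [← σ.lam_comp L t₁ t v₁ rfl, ← σ.lam_comp L t₂ t v₂ hv.symm, lam_eq_lam_iff,
    MorphismProperty.map_eq_iff_postcomp L σ.P] at h
  obtain ⟨Z, w, hw, hfac⟩ := h
  refine ⟨Z, v₁ ≫ w, v₂ ≫ w, σ.comp_mem _ _ hv₁ hw, σ.comp_mem _ _ hv₂ hw, ?_, ?_⟩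
  · rw [reassoc_of% hv]
  · simpa using hfac

end SevereOreFP

/-- Let `σ` be a severe right Ore set in the category of finitely presented right
`R`-modules and let `L` be the localization functor to the localized category `A_σ`.
Then the natural map `λ : colim_t Hom(M, N_t) → Hom_{A_σ}([M], [N])`, `f ↦ f ∘ t⁻¹`,
is a bijection: it is surjective, and two elements `f₁ ∘ t₁⁻¹`, `f₂ ∘ t₂⁻¹` agree iff
they are identified in the colimit, i.e. there exist `u₁, u₂ ∈ σ` with
`t₁ ≫ u₁ = t₂ ≫ u₂` and `f₁ ≫ u₁ = f₂ ≫ u₂`. -/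
theorem lam_bijective (σ : SevereOreFP R)
    {D : Type u'} [Category.{v'} D] (L : FPMod R ⥤ D) [L.IsLocalization σ.P]
    (M N : FPMod R) :
    (∀ g : L.obj M ⟶ L.obj N, ∃ (t : σ.Idx N) (f : M ⟶ t.cod), g = σ.lam L t f) ∧
    (∀ (t₁ t₂ : σ.Idx N) (f₁ : M ⟶ t₁.cod) (f₂ : M ⟶ t₂.cod),
      σ.lam L t₁ f₁ = σ.lam L t₂ f₂ →
      ∃ (D' : FPMod R) (u₁ : t₁.cod ⟶ D') (u₂ : t₂.cod ⟶ D'),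
        σ.P u₁ ∧ σ.P u₂ ∧ t₁.hom ≫ u₁ = t₂.hom ≫ u₂ ∧ f₁ ≫ u₁ = f₂ ≫ u₂) :=
  ⟨σ.exists_eq_lam L, σ.exists_mem_of_lam_eq L⟩
end

section
/- Let σ be a severe right Ore set in the category of finitely presented right R-modules and let M_σ denote the directed colimit of codomains of maps in σ with domain M. Then for finitely presented M and N, the natural map ι : M → M_σ induces an isomorphism Hom_R(M_σ, N_σ) ≅ Hom_R(M, N_σ). -/
open CategoryTheory CategoryTheory.Limits

universe u

/-- A severe right Ore set in the category of finitely presented right `R`-modules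
(modelled as a class of maps between finitely presented objects of `ModuleCat R`):
it contains all isomorphisms, is closed under composition and pushouts, and is
severely right revengeful. -/
structure SevereOre (R : Type u) [Ring R] : Type (u + 1) where
  P : CategoryTheory.MorphismProperty (ModuleCat.{u} R)
  fp_of_mem : ∀ ⦃A B : ModuleCat.{u} R⦄ (f : A ⟶ B), P f →
    Module.FinitePresentation R A ∧ Module.FinitePresentation R B
  iso_mem : ∀ ⦃A B : ModuleCat.{u} R⦄ (f : A ⟶ B), Module.FinitePresentation R A →
    Module.FinitePresentation R B → IsIso f → P f
  comp_mem : ∀ ⦃A B C : ModuleCat.{u} R⦄ (f : A ⟶ B) (g : B ⟶ C), P f → P g → P (f ≫ g)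
  pushout_mem : ∀ ⦃A B C : ModuleCat.{u} R⦄ (s : A ⟶ B) (a : A ⟶ C),
    Module.FinitePresentation R C → P s →
    P (biprod.inr ≫ cokernel.π (biprod.lift s a))
  revenge : ∀ ⦃A B C : ModuleCat.{u} R⦄ (s : A ⟶ B) (a : B ⟶ C),
    Module.FinitePresentation R C → P s → s ≫ a = 0 → P (cokernel.π a)

variable {R : Type u} [Ring R]

/-- The directed system of maps in `σ` starting at `M`: objects are maps `s : M ⟶ M_s`
in `σ`, and morphisms `s → u` are maps `t ∈ σ` with `s ≫ t = u`. -/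
structure SevereOre.Idx (σ : SevereOre R) (M : ModuleCat.{u} R) : Type (u + 1) where
  cod : ModuleCat.{u} R
  hom : M ⟶ cod
  mem : σ.P hom

instance (σ : SevereOre R) (M : ModuleCat.{u} R) : Category (σ.Idx M) where
  Hom s u := { t : s.cod ⟶ u.cod // σ.P t ∧ s.hom ≫ t = u.hom }
  id s := ⟨𝟙 s.cod,
    σ.iso_mem _ (σ.fp_of_mem _ s.mem).2 (σ.fp_of_mem _ s.mem).2 inferInstance,
    Category.comp_id _⟩
  comp f g := ⟨f.1 ≫ g.1, σ.comp_mem _ _ f.2.1 g.2.1,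
    by rw [← Category.assoc, f.2.2, g.2.2]⟩
  id_comp f := Subtype.ext (Category.id_comp f.1)
  comp_id f := Subtype.ext (Category.comp_id f.1)
  assoc f g h := Subtype.ext (Category.assoc f.1 g.1 h.1)

/-- The diagram `s ↦ M_s` of codomains of maps in `σ` with domain `M`. -/
def SevereOre.diag (σ : SevereOre R) (M : ModuleCat.{u} R) :
    σ.Idx M ⥤ ModuleCat.{u} R where
  obj s := s.cod
  map t := t.1
  map_id _ := rfl
  map_comp _ _ := rfl

/-!
The key point is that `N_σ` is `σ`-local: for `s : A ⟶ B` in `σ`, precomposition with `s` is a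
bijection `Hom(B, N_σ) → Hom(A, N_σ)`. The index category of `N_σ` is filtered (pushouts and
coequalising cokernels stay in `σ`), so maps from the finitely presented `A`, `B` into `N_σ` factor
through some `N_t`, and a map from `A` that vanishes in `N_σ` already vanishes in some `N_t`.
Surjectivity then comes from pushing out `s` along `A ⟶ N_t`, and injectivity from the cokernel
of `B ⟶ N_t`, which lies in `σ` by severity because `s` kills it.
A map from `M_σ` to a `σ`-local object is a compatible family of maps out of the `M_s`, each
uniquely determined by its restriction along `s : M ⟶ M_s`, hence by the restriction to `M`.
-/
namespace ModuleCat

variable {J : Type*} [Category J] [IsFiltered J] {F : J ⥤ ModuleCat.{u} R}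
  [PreservesColimit F (forget (ModuleCat.{u} R))] {c : Cocone F}

lemma exists_forall_map_eq_zero_of_isColimit (hc : IsColimit c) {j : J} (S : Finset (F.obj j))
    (hS : ∀ x ∈ S, c.ι.app j x = 0) : ∃ (k : J) (f : j ⟶ k), ∀ x ∈ S, F.map f x = 0 := by
  classical
  induction S using Finset.induction_on with
  | empty => exact ⟨j, 𝟙 j, by simp⟩
  | insert x S _ ih =>
    obtain ⟨k, f, hf⟩ := ih fun y hy => hS y (Finset.mem_insert_of_mem hy)
    have hx : c.ι.app k (F.map f x) = c.ι.app k 0 := by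
      rw [Cocone.w_apply, hS x (Finset.mem_insert_self x S), map_zero]
    obtain ⟨l, g, g', hg⟩ := Concrete.isColimit_exists_of_rep_eq F hc _ _ hx
    refine ⟨l, f ≫ g, fun y hy => ?_⟩
    rcases Finset.mem_insert.mp hy with rfl | hy
    · simpa using hg
    · simp [hf y hy]

lemma exists_forall_ι_app_eq_of_isColimit (hc : IsColimit c) (S : Finset c.pt) :
    ∃ j : J, ∀ x ∈ S, ∃ y : F.obj j, c.ι.app j y = x := by
  classical
  induction S using Finset.induction_on with
  | empty => exact ⟨IsFiltered.nonempty.some, by simp⟩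
  | insert x S _ ih =>
    obtain ⟨j, hj⟩ := ih
    obtain ⟨k, f, y, hy⟩ := Concrete.exists_hom_ι_eq_of_isColimit F hc x j
    refine ⟨k, fun z hz => ?_⟩
    rcases Finset.mem_insert.mp hz with rfl | hz
    · exact ⟨y, hy⟩
    · obtain ⟨y', rfl⟩ := hj z hz
      exact ⟨F.map f y', Cocone.w_apply c f y'⟩

lemma exists_comp_map_eq_zero_of_isColimit (hc : IsColimit c) {A : ModuleCat.{u} R}
    [Module.Finite R A] {j : J} (a : A ⟶ F.obj j) (ha : a ≫ c.ι.app j = 0) :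
    ∃ (k : J) (f : j ⟶ k), a ≫ F.map f = 0 := by
  classical
  obtain ⟨S, hS⟩ := Module.Finite.fg_top (R := R) (M := A)
  obtain ⟨k, f, hf⟩ := exists_forall_map_eq_zero_of_isColimit hc (S.image a) (by
    simp only [Finset.mem_image]
    rintro _ ⟨z, -, rfl⟩
    simpa using congr($ha z))
  refine ⟨k, f, ModuleCat.hom_ext (LinearMap.ext_on hS fun z hz => ?_)⟩
  simpa using hf (a z) (Finset.mem_image_of_mem a hz)

lemma exists_comp_ι_app_eq_of_isColimit (hc : IsColimit c) {A : ModuleCat.{u} R}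
    [Module.FinitePresentation R A] (f : A ⟶ c.pt) :
    ∃ (j : J) (a : A ⟶ F.obj j), a ≫ c.ι.app j = f := by
  classical
  obtain ⟨n, K, e, hK⟩ := Module.FinitePresentation.exists_fin R A
  let p : (Fin n → R) →ₗ[R] A := e.symm.toLinearMap ∘ₗ K.mkQ
  obtain ⟨j, hj⟩ := exists_forall_ι_app_eq_of_isColimit hc
    (Finset.univ.image fun i => f (p (Pi.single i 1)))
  choose y hy using fun i => hj _ (Finset.mem_image_of_mem _ (Finset.mem_univ i))
  let g : (Fin n → R) →ₗ[R] F.obj j := Fintype.linearCombination R y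
  have hg : (c.ι.app j).hom ∘ₗ g = f.hom ∘ₗ p := by
    ext i
    simp [g, hy]
  have : Module.Finite R K := Module.Finite.iff_fg.mpr hK
  obtain ⟨k, h, hh⟩ := exists_comp_map_eq_zero_of_isColimit hc
    (ModuleCat.ofHom (g ∘ₗ K.subtype) : ModuleCat.of R K ⟶ F.obj j) (by
      ext z
      simpa [p, (Submodule.Quotient.mk_eq_zero K).mpr z.2] using congr($hg z))
  have hker : K ≤ LinearMap.ker ((F.map h).hom ∘ₗ g) := fun z hz => congr($hh ⟨z, hz⟩)
  refine ⟨k, ModuleCat.ofHom (K.liftQ _ hker ∘ₗ e.toLinearMap), ?_⟩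
  ext z
  obtain ⟨v, rfl⟩ := (e.symm.surjective.comp K.mkQ_surjective) z
  simpa [p] using congr($hg v)

end ModuleCat

-- The cokernel of `biprod.lift s (-a)` is the pushout of `s` and `a`; this is its square.
lemma cokernel_π_biprod_lift_neg_comm {C : Type*} [Category C] [Preadditive C]
    {A B D : C} [HasBinaryBiproduct B D] (s : A ⟶ B) (a : A ⟶ D)
    [HasCokernel (biprod.lift s (-a))] :
    s ≫ biprod.inl ≫ cokernel.π (biprod.lift s (-a)) =
      a ≫ biprod.inr ≫ cokernel.π (biprod.lift s (-a)) := by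
  have h : (s ≫ biprod.inl - a ≫ biprod.inr) ≫ cokernel.π (biprod.lift s (-a)) = 0 := by
    rw [← cokernel.condition (biprod.lift s (-a))]
    congr 1
    ext <;> simp
  rw [Preadditive.sub_comp, sub_eq_zero] at h
  simpa only [Category.assoc] using h

namespace SevereOre

variable (σ : SevereOre R)

lemma neg_mem {A B : ModuleCat.{u} R} {f : A ⟶ B} (hf : σ.P f) : σ.P (-f) := by
  have hB := (σ.fp_of_mem f hf).2
  have : IsIso (-𝟙 B) := ⟨-𝟙 B, by simp, by simp⟩
  simpa using σ.comp_mem f (-𝟙 B) hf (σ.iso_mem _ hB hB this)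

lemma inl_comp_cokernel_π_mem {A B D : ModuleCat.{u} R} {s : A ⟶ B} {a : A ⟶ D}
    (hs : σ.P s) (ha : σ.P a) : σ.P (biprod.inl ≫ cokernel.π (biprod.lift s a)) := by
  have hB := (σ.fp_of_mem s hs).2
  -- `pushout_mem` only controls the leg out of `D`; the braiding swaps the two summands.
  let φ : cokernel (biprod.lift s a) ≅ cokernel (biprod.lift a s) :=
    cokernel.mapIso _ _ (Iso.refl A) (biprod.braiding B D) (by apply biprod.hom_ext <;> simp)
  have hφ : biprod.inl ≫ cokernel.π (biprod.lift s a) =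
      (biprod.inr ≫ cokernel.π (biprod.lift a s)) ≫ φ.inv := by
    have hβ : biprod.inl ≫ (biprod.braiding B D).hom = biprod.inr := by
      apply biprod.hom_ext <;> simp
    rw [Iso.eq_comp_inv]
    simp only [φ, cokernel.mapIso, cokernel.map, Category.assoc, cokernel.π_desc, reassoc_of% hβ]
  have hq := σ.pushout_mem a s hB ha
  rw [hφ]
  exact σ.comp_mem _ _ hq (σ.iso_mem _ (σ.fp_of_mem _ hq).2
    (σ.fp_of_mem _ (σ.pushout_mem s a (σ.fp_of_mem a ha).2 hs)).2 inferInstance)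

variable {σ} {M : ModuleCat.{u} R}

def Idx.one (hM : Module.FinitePresentation R M) : σ.Idx M :=
  ⟨M, 𝟙 M, σ.iso_mem _ hM hM inferInstance⟩

-- An `abbrev`, so that `(t.push c hc).cod` is reducibly `X`.
abbrev Idx.push (t : σ.Idx M) {X : ModuleCat.{u} R} (c : t.cod ⟶ X) (hc : σ.P c) : σ.Idx M :=
  ⟨X, t.hom ≫ c, σ.comp_mem _ _ t.mem hc⟩

def Idx.toPush (t : σ.Idx M) {X : ModuleCat.{u} R} (c : t.cod ⟶ X) (hc : σ.P c) :
    t ⟶ t.push c hc :=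
  ⟨c, hc, rfl⟩

lemma Idx.fp_cod (t : σ.Idx M) : Module.FinitePresentation R t.cod :=
  (σ.fp_of_mem _ t.mem).2

-- `c.ι.app t` with its source written as `t.cod` rather than `(σ.diag M).obj t`, so that
-- composites with maps into `t.cod` can be rewritten.
abbrev coconeLeg (c : Cocone (σ.diag M)) (t : σ.Idx M) : t.cod ⟶ c.pt :=
  c.ι.app t

lemma coconeLeg_w (c : Cocone (σ.diag M)) {t t' : σ.Idx M} (f : t ⟶ t') :
    f.1 ≫ coconeLeg c t' = coconeLeg c t :=
  c.w f

lemma comp_coconeLeg_push (c : Cocone (σ.diag M)) (t : σ.Idx M) {X : ModuleCat.{u} R}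
    (q : t.cod ⟶ X) (hq : σ.P q) : q ≫ coconeLeg c (t.push q hq) = coconeLeg c t :=
  c.w (t.toPush q hq)

def Idx.isoPush (t : σ.Idx M) {X : ModuleCat.{u} R} (e : t.cod ≅ X)
    (hX : Module.FinitePresentation R X) :
    t ≅ t.push e.hom (σ.iso_mem _ t.fp_cod hX inferInstance) where
  hom := t.toPush _ _
  inv := ⟨e.inv, σ.iso_mem e.inv hX t.fp_cod inferInstance, by simp [Idx.push]⟩
  hom_inv_id := Subtype.ext e.hom_inv_id
  inv_hom_id := Subtype.ext e.inv_hom_id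

lemma hom_comp_coconeLeg (hM : Module.FinitePresentation R M) (c : Cocone (σ.diag M))
    (t : σ.Idx M) : t.hom ≫ coconeLeg c t = coconeLeg c (Idx.one hM) :=
  c.w (⟨t.hom, t.mem, Category.id_comp _⟩ : Idx.one hM ⟶ t)

/-- Every `M_s` is isomorphic to some `R^n ⧸ K`, so the isomorphism classes of `σ.Idx M` are
indexed by a type in universe `u`. -/
instance Idx.essentiallySmall : EssentiallySmall.{u} (σ.Idx M) := by
  refine (essentiallySmall_iff _).mpr ⟨?_, inferInstance⟩
  let quotientIdx : (Σ (n : ℕ) (K : Submodule R (Fin n → R)),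
      {h : M ⟶ ModuleCat.of R ((Fin n → R) ⧸ K) // σ.P h}) → Skeleton (σ.Idx M) :=
    fun x => toSkeleton ⟨_, x.2.2.1, x.2.2.2⟩
  refine small_of_surjective (f := quotientIdx) fun y => ?_
  obtain ⟨t, rfl⟩ := Quotient.exists_rep y
  have := t.fp_cod
  obtain ⟨n, K, e, -⟩ := Module.FinitePresentation.exists_fin R t.cod
  have hX : Module.FinitePresentation R ((Fin n → R) ⧸ K) := .of_equiv e
  exact ⟨⟨n, K, _, (t.push _ (σ.iso_mem e.toModuleIso.hom t.fp_cod hX inferInstance)).mem⟩,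
    Quotient.sound ⟨(t.isoPush e.toModuleIso hX).symm⟩⟩

variable (σ)

lemma isFiltered (hM : Module.FinitePresentation R M) : IsFiltered (σ.Idx M) where
  nonempty := ⟨Idx.one hM⟩
  cocone_objs s t := by
    have hp := σ.inl_comp_cokernel_π_mem s.mem (σ.neg_mem t.mem)
    have hq := σ.pushout_mem s.hom (-t.hom) t.fp_cod s.mem
    exact ⟨s.push _ hp, s.toPush _ hp, ⟨_, hq, (cokernel_π_biprod_lift_neg_comm _ _).symm⟩,
      trivial⟩
  cocone_maps s t f g := by
    have hπ := σ.revenge s.hom (f.1 - g.1) t.fp_cod s.mem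
      (by rw [Preadditive.comp_sub, f.2.2, g.2.2, sub_self])
    refine ⟨t.push _ hπ, t.toPush _ hπ, Subtype.ext ?_⟩
    show f.1 ≫ cokernel.π (f.1 - g.1) = g.1 ≫ cokernel.π (f.1 - g.1)
    rw [← sub_eq_zero, ← Preadditive.sub_comp, cokernel.condition]

-- `forget` only preserves filtered colimits of small shape, and `σ.Idx M` is merely essentially
-- small.
lemma preservesColimit_forget_diag (hM : Module.FinitePresentation R M) :
    PreservesColimit (σ.diag M) (forget (ModuleCat.{u} R)) := by
  have := σ.isFiltered hM
  have : IsFiltered (SmallModel (σ.Idx M)) := .of_equivalence (equivSmallModel _)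
  have := preservesColimitsOfShape_of_equiv (equivSmallModel (σ.Idx M)).symm
    (forget (ModuleCat.{u} R))
  infer_instance

lemma isLocal_pt_of_isColimit (hM : Module.FinitePresentation R M) {c : Cocone (σ.diag M)}
    (hc : IsColimit c) : σ.P.isLocal c.pt := by
  have := σ.isFiltered hM
  have := σ.preservesColimit_forget_diag hM
  intro A B s hs
  have hA := (σ.fp_of_mem s hs).1
  have hB := (σ.fp_of_mem s hs).2
  constructor
  · refine (injective_iff_map_eq_zero (Preadditive.leftComp c.pt s)).mpr fun g hg => ?_
    obtain ⟨t, b, rfl⟩ : ∃ (t : σ.Idx M) (b : B ⟶ t.cod), b ≫ coconeLeg c t = g :=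
      ModuleCat.exists_comp_ι_app_eq_of_isColimit hc g
    obtain ⟨t', f, hf⟩ : ∃ (t' : σ.Idx M) (f : t ⟶ t'), (s ≫ b) ≫ f.1 = 0 :=
      ModuleCat.exists_comp_map_eq_zero_of_isColimit hc (s ≫ b) hg
    -- `s` kills `b ≫ f.1`, so the cokernel of `b ≫ f.1` is again a map in `σ`.
    have hπ := σ.revenge s (b ≫ f.1) t'.fp_cod hs (by rwa [← Category.assoc])
    calc b ≫ coconeLeg c t
        = (b ≫ f.1) ≫ cokernel.π (b ≫ f.1) ≫ coconeLeg c (t'.push _ hπ) := by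
          rw [comp_coconeLeg_push, Category.assoc, coconeLeg_w]
      _ = 0 := by rw [cokernel.condition_assoc, zero_comp]
  · intro g
    obtain ⟨t, a, rfl⟩ : ∃ (t : σ.Idx M) (a : A ⟶ t.cod), a ≫ coconeLeg c t = g :=
      ModuleCat.exists_comp_ι_app_eq_of_isColimit hc g
    have hq := σ.pushout_mem s (-a) t.fp_cod hs
    refine ⟨(biprod.inl ≫ cokernel.π (biprod.lift s (-a))) ≫ coconeLeg c (t.push _ hq), ?_⟩
    dsimp only
    rw [← Category.assoc, cokernel_π_biprod_lift_neg_comm, Category.assoc,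
      comp_coconeLeg_push]

lemma bijective_ι_one_comp_of_isLocal (hM : Module.FinitePresentation R M)
    {c : Cocone (σ.diag M)} (hc : IsColimit c) {Z : ModuleCat.{u} R} (hZ : σ.P.isLocal Z) :
    Function.Bijective (fun g : c.pt ⟶ Z => c.ι.app (Idx.one hM) ≫ g) := by
  constructor
  · intro g₁ g₂ h
    refine hc.hom_ext fun t => (hZ t.hom t.mem).1 ?_
    change t.hom ≫ coconeLeg c t ≫ g₁ = t.hom ≫ coconeLeg c t ≫ g₂
    rw [← Category.assoc, ← Category.assoc, hom_comp_coconeLeg hM]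
    exact h
  · intro f
    choose g hg using fun t : σ.Idx M => (hZ t.hom t.mem).2 f
    simp only at hg
    let d : Cocone (σ.diag M) :=
      { pt := Z
        ι := { app := g
               naturality t t' e := by
                 change e.1 ≫ g t' = g t ≫ 𝟙 Z
                 rw [Category.comp_id]
                 apply (hZ t.hom t.mem).1
                 change t.hom ≫ e.1 ≫ g t' = t.hom ≫ g t
                 rw [← Category.assoc, e.2.2, hg, hg] } }
    refine ⟨hc.desc d, (hc.fac d _).trans ?_⟩
    exact (Category.id_comp _).symm.trans (hg (Idx.one hM))

end SevereOre

/-- Let `σ` be a severe right Ore set in the category of finitely presented right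
`R`-modules and, for finitely presented `M`, let `M_σ` be the directed colimit of the
codomains of the maps in `σ` with domain `M`.  Then for finitely presented `M` and `N`,
the natural map `ι : M → M_σ` induces an isomorphism
`Hom_R(M_σ, N_σ) ≅ Hom_R(M, N_σ)`. -/
theorem hom_colim_bijective (σ : SevereOre R)
    (M N : ModuleCat.{u} R)
    (hM : Module.FinitePresentation R M) (hN : Module.FinitePresentation R N)
    (cM : Limits.Cocone (σ.diag M)) (hcM : Limits.IsColimit cM)
    (cN : Limits.Cocone (σ.diag N)) (hcN : Limits.IsColimit cN) :
    Function.Bijective (fun (g : cM.pt ⟶ cN.pt) =>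
      cM.ι.app ⟨M, 𝟙 M, σ.iso_mem _ hM hM inferInstance⟩ ≫ g) :=
  σ.bijective_ι_one_comp_of_isLocal hM hcM (σ.isLocal_pt_of_isColimit hN hcN)
end

section
/- Let S be a set of finitely presented right R-modules of projective dimension at most 1, let E be the extension closure of S, and let U be the class of quotients of modules in E. Then U is closed under extensions: if 0 → U₁ → U → U₂ → 0 is a short exact sequence with U₁, U₂ ∈ U, then U ∈ U. -/
/-!
Every module in the extension closure of `S` has a projective resolution `0 → P → Q → E → 0`
of length one: the generators of `S` do by hypothesis, zero modules trivially, and extensions by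
the horseshoe construction.

Now let `0 → U₁ → U → U₂ → 0` be exact with surjections `E₁ ↠ U₁`, `E₂ ↠ U₂` from the extension
closure, and take such a resolution `0 → P → Q → E₂ → 0`. Lift `Q → E₂ → U₂` to `f : Q → U`; then
`f` maps `P` into `U₁`, and projectivity of `P` lifts this to `g : P → E₁`. The pushout of
`E₁ ← P → Q` is an extension of `E₂` by `E₁`, hence lies in the extension closure, and `π₁` and `f`
induce a surjection from it onto `U`. This is the surjectivity of `Ext¹(E₂, E₁) → Ext¹(E₂, U₁)`.
-/

open CategoryTheory CategoryTheory.Limits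

universe u

variable {R : Type u} [Ring R]

/-- The extension closure of a class `S` of modules: the smallest class containing `S`
and the zero modules and closed under extensions. -/
inductive ExtClosure (S : ModuleCat.{u} R → Prop) : ModuleCat.{u} R → Prop
  | mem (M : ModuleCat.{u} R) : S M → ExtClosure S M
  | zero (M : ModuleCat.{u} R) : Subsingleton ↥M → ExtClosure S M
  | ext ⦃A B C : ModuleCat.{u} R⦄ (i : A ⟶ B) (p : B ⟶ C) :
      Function.Injective i → Function.Surjective p →
      LinearMap.range i.hom = LinearMap.ker p.hom →
      ExtClosure S A → ExtClosure S C → ExtClosure S B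

/-- The class `U` of quotients of modules in the extension closure of `S`. -/
def QuotOfExtClosure (S : ModuleCat.{u} R → Prop) : ModuleCat.{u} R → Prop :=
  fun U => ∃ E : ModuleCat.{u} R, ExtClosure S E ∧ ∃ π : E ⟶ U, Function.Surjective π

open Function LinearMap

section Lifting

variable {A B C E P Q : Type*} [AddCommGroup A] [AddCommGroup B] [AddCommGroup C]
  [AddCommGroup E] [AddCommGroup P] [AddCommGroup Q] [Module R A] [Module R B] [Module R C]
  [Module R E] [Module R P] [Module R Q] {i : A →ₗ[R] B} {p : B →ₗ[R] C}

theorem Function.Exact.exists_comp_eq_of_projective [Module.Projective R P] (hip : Exact i p)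
    {π : E →ₗ[R] A} (hπ : Surjective π) {k : P →ₗ[R] B} (hk : p ∘ₗ k = 0) :
    ∃ g : P →ₗ[R] E, (i ∘ₗ π) ∘ₗ g = k := by
  have hiπ : ∀ e, (i ∘ₗ π) e ∈ ker p := fun e => hip.apply_apply_eq_zero (π e)
  have hkp : ∀ x, k x ∈ ker p := fun x => LinearMap.congr_fun hk x
  have hsurj : Surjective ((i ∘ₗ π).codRestrict (ker p) hiπ) := by
    rintro ⟨b, hb⟩
    obtain ⟨a, rfl⟩ := (hip b).1 hb
    obtain ⟨e, rfl⟩ := hπ a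
    exact ⟨e, rfl⟩
  obtain ⟨g, hg⟩ := Module.projective_lifting_property _ (k.codRestrict (ker p) hkp) hsurj
  exact ⟨g, LinearMap.ext fun x => congrArg Subtype.val (LinearMap.congr_fun hg x)⟩

theorem Function.Exact.coprod_comp_surjective (hip : Exact i p) {π : E →ₗ[R] A}
    (hπ : Surjective π) {f : Q →ₗ[R] B} (hf : Surjective (p ∘ₗ f)) :
    Surjective ((i ∘ₗ π).coprod f) := by
  intro b
  obtain ⟨q, hq⟩ := hf (p b)
  obtain ⟨a, ha⟩ := (hip (b - f q)).1 (by simp_all)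
  obtain ⟨e, rfl⟩ := hπ a
  exact ⟨(e, q), by simp [ha]⟩

end Lifting

namespace LinearMap

variable {A E M P Q : Type*} [AddCommGroup A] [AddCommGroup E] [AddCommGroup M]
  [AddCommGroup P] [AddCommGroup Q] [Module R A] [Module R E] [Module R M] [Module R P]
  [Module R Q] (g : P →ₗ[R] A) (j : P →ₗ[R] Q)

abbrev Pushout : Type _ := (A × Q) ⧸ range (g.prod (-j))

namespace Pushout

def inl : A →ₗ[R] Pushout g j := (range (g.prod (-j))).mkQ ∘ₗ LinearMap.inl R A Q

variable {g j}

def desc (a : A →ₗ[R] M) (b : Q →ₗ[R] M) (h : a ∘ₗ g = b ∘ₗ j) : Pushout g j →ₗ[R] M :=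
  (range (g.prod (-j))).liftQ (a.coprod b) <| by
    rintro _ ⟨x, rfl⟩
    simpa [add_neg_eq_zero] using LinearMap.congr_fun h x

theorem desc_surjective {a : A →ₗ[R] M} {b : Q →ₗ[R] M} {h : a ∘ₗ g = b ∘ₗ j}
    (hab : Surjective (a.coprod b)) : Surjective (desc a b h) := by
  rw [← range_eq_top, desc, Submodule.range_liftQ, range_eq_top]
  exact hab

theorem desc_zero_surjective {π : Q →ₗ[R] E} {h : (0 : A →ₗ[R] E) ∘ₗ g = π ∘ₗ j}
    (hπ : Surjective π) : Surjective (desc 0 π h) :=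
  desc_surjective fun e => let ⟨y, hy⟩ := hπ e; ⟨(0, y), by simpa using hy⟩

theorem inl_injective (hj : Injective j) : Injective (inl g j) := by
  rw [← ker_eq_bot, eq_bot_iff]
  intro a ha
  obtain ⟨x, hx⟩ := (Submodule.Quotient.mk_eq_zero _).1 ha
  have hx0 : x = 0 := hj (by simpa using congrArg Prod.snd hx)
  simpa [hx0] using (congrArg Prod.fst hx).symm

theorem exact_inl_desc {π : Q →ₗ[R] E} {h : (0 : A →ₗ[R] E) ∘ₗ g = π ∘ₗ j} (hjπ : Exact j π) :
    Exact (inl g j) (desc 0 π h) := by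
  refine exact_of_comp_of_mem_range (by ext; simp [inl, desc]) ?_
  intro z hz
  obtain ⟨⟨a, y⟩, rfl⟩ := Submodule.Quotient.mk_surjective _ z
  obtain ⟨x, rfl⟩ := (hjπ y).1 (by simpa [desc] using hz)
  refine ⟨a + g x, (Submodule.Quotient.eq _).2 ⟨x, ?_⟩⟩
  simp

end Pushout

end LinearMap

section Horseshoe

variable {A B C PA QA PC QC : Type*} [AddCommGroup A] [AddCommGroup B] [AddCommGroup C]
  [AddCommGroup PA] [AddCommGroup QA] [AddCommGroup PC] [AddCommGroup QC] [Module R A]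
  [Module R B] [Module R C] [Module R PA] [Module R QA] [Module R PC] [Module R QC]
  {i : A →ₗ[R] B} {p : B →ₗ[R] C} {jA : PA →ₗ[R] QA} {πA : QA →ₗ[R] A}
  {jC : PC →ₗ[R] QC} {πC : QC →ₗ[R] C}

theorem LinearMap.injective_coprod_prod_comp_snd (hjA : Injective jA) (hjC : Injective jC)
    (s : PC →ₗ[R] QA) : Injective ((jA.coprod s).prod (jC ∘ₗ snd R PA PC)) := by
  rintro ⟨u, v⟩ ⟨u', v'⟩ h
  obtain rfl : v = v' := hjC (congrArg Prod.snd h)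
  have hu : jA u = jA u' := by simpa using congrArg Prod.fst h
  rw [hjA hu]

theorem Function.Exact.horseshoe (hi : Injective i) (hip : Exact i p) (hA : Exact jA πA)
    (hC : Exact jC πC) {f : QC →ₗ[R] B} (hf : p ∘ₗ f = πC) {s : PC →ₗ[R] QA}
    (hs : (i ∘ₗ πA) ∘ₗ s = f ∘ₗ jC) :
    Exact ((jA.coprod (-s)).prod (jC ∘ₗ snd R PA PC)) ((i ∘ₗ πA).coprod f) := by
  have hs' : ∀ v, i (πA (s v)) = f (jC v) := LinearMap.congr_fun hs
  refine exact_of_comp_of_mem_range ?_ ?_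
  · ext v <;> simp [hA.apply_apply_eq_zero, hs']
  rintro ⟨x, y⟩ hxy
  have hy : πC y = 0 := by
    simpa [← hf, hip.apply_apply_eq_zero] using congrArg p hxy
  obtain ⟨v, rfl⟩ := (hC y).1 hy
  have hx : πA (x + s v) = 0 := hi (by simpa [← hs'] using hxy)
  obtain ⟨u, hu⟩ := (hA _).1 hx
  exact ⟨(u, v), by simp [hu]⟩

end Horseshoe

namespace ModuleCat

def HasLengthOneProjectiveResolution (M : ModuleCat.{u} R) : Prop :=
  ∃ (P Q : ModuleCat.{u} R) (j : P →ₗ[R] Q) (π : Q →ₗ[R] M), Module.Projective R P ∧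
    Module.Projective R Q ∧ Injective j ∧ Surjective π ∧ Exact j π

namespace HasLengthOneProjectiveResolution

theorem of_subsingleton (M : ModuleCat.{u} R) [Subsingleton M] :
    HasLengthOneProjectiveResolution M :=
  ⟨M, M, LinearMap.id, LinearMap.id, .of_free, .of_free, injective_id,
    surjective_id, fun y => by simp [Subsingleton.elim y 0]⟩

theorem of_cokernel {P Q M : ModuleCat.{u} R} [Module.Projective R P] [Module.Projective R Q]
    (i : P ⟶ Q) (hi : Injective i) (e : cokernel i ≅ M) : HasLengthOneProjectiveResolution M := by
  let e' : (Q ⧸ range i.hom) ≃ₗ[R] M := ((cokernelIsoRangeQuotient i).symm ≪≫ e).toLinearEquiv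
  exact ⟨P, Q, i.hom, e' ∘ₗ (range i.hom).mkQ, inferInstance, inferInstance, hi,
    e'.surjective.comp (Submodule.mkQ_surjective _),
    (exact_map_mkQ_range i.hom).comp_injective _ e'.injective (map_zero e')⟩

theorem of_exact {A B C : ModuleCat.{u} R} {i : A ⟶ B} {p : B ⟶ C} (hi : Injective i)
    (hp : Surjective p) (hip : Exact i.hom p.hom) (hA : HasLengthOneProjectiveResolution A)
    (hC : HasLengthOneProjectiveResolution C) : HasLengthOneProjectiveResolution B := by
  obtain ⟨PA, QA, jA, πA, _, _, hjA, hπA, hA⟩ := hA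
  obtain ⟨PC, QC, jC, πC, _, _, hjC, hπC, hC⟩ := hC
  obtain ⟨f, hf⟩ := Module.projective_lifting_property p.hom πC hp
  obtain ⟨s, hs⟩ := hip.exists_comp_eq_of_projective hπA (k := f ∘ₗ jC) (by
    rw [← LinearMap.comp_assoc, hf, hC.linearMap_comp_eq_zero])
  exact ⟨.of R (PA × PC), .of R (QA × QC), _, _, inferInstance, inferInstance,
    injective_coprod_prod_comp_snd hjA hjC (-s),
    hip.coprod_comp_surjective hπA (hf ▸ hπC), hip.horseshoe hi hA hC hf hs⟩

end HasLengthOneProjectiveResolution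

end ModuleCat

theorem ExtClosure.hasLengthOneProjectiveResolution {S : ModuleCat.{u} R → Prop}
    (hS : ∀ M, S M → ModuleCat.HasLengthOneProjectiveResolution M) {M : ModuleCat.{u} R}
    (hM : ExtClosure S M) : ModuleCat.HasLengthOneProjectiveResolution M := by
  induction hM with
  | mem M hM => exact hS M hM
  | zero M _ => exact .of_subsingleton M
  | ext i p hi hp hip _ _ hA hC => exact .of_exact hi hp (exact_iff.2 hip.symm) hA hC

open ModuleCat LinearMap.Pushout in
/-- Let `S` be a set of finitely presented right `R`-modules of projective dimension at
most 1, `E` its extension closure and `U` the class of quotients of modules in `E`.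
Then `U` is closed under extensions. -/
theorem quotOfExtClosure_closed_under_extensions (S : ModuleCat.{u} R → Prop)
    (hS : ∀ M : ModuleCat.{u} R, S M → Module.FinitePresentation R M ∧
      ∃ (P Q : ModuleCat.{u} R) (i : P ⟶ Q),
        Module.Finite R P ∧ Module.Projective R P ∧ Module.Finite R Q ∧
          Module.Projective R Q ∧ Function.Injective i ∧ Nonempty (cokernel i ≅ M)) :
    ∀ ⦃U₁ U U₂ : ModuleCat.{u} R⦄ (i : U₁ ⟶ U) (p : U ⟶ U₂),
      Function.Injective i → Function.Surjective p →
      LinearMap.range i.hom = LinearMap.ker p.hom →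
      QuotOfExtClosure S U₁ → QuotOfExtClosure S U₂ → QuotOfExtClosure S U := by
  rintro U₁ U U₂ i p - hp hip ⟨E₁, hE₁, π₁, hπ₁⟩ ⟨E₂, hE₂, π₂, hπ₂⟩
  replace hip : Exact i.hom p.hom := exact_iff.2 hip.symm
  obtain ⟨P, Q, j, π, _, _, hj, hπ, hjπ⟩ := hE₂.hasLengthOneProjectiveResolution fun M hM => by
    obtain ⟨-, P, Q, i, -, _, -, _, hi, ⟨e⟩⟩ := hS M hM
    exact .of_cokernel i hi e
  obtain ⟨f, hf⟩ := Module.projective_lifting_property p.hom (π₂.hom ∘ₗ π) hp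
  obtain ⟨g, hg⟩ := hip.exists_comp_eq_of_projective hπ₁ (k := f ∘ₗ j) (by
    rw [← LinearMap.comp_assoc, hf, LinearMap.comp_assoc, hjπ.linearMap_comp_eq_zero,
      LinearMap.comp_zero])
  have hπj : (0 : E₁ →ₗ[R] E₂) ∘ₗ g = π ∘ₗ j := by
    rw [LinearMap.zero_comp, hjπ.linearMap_comp_eq_zero]
  have hY : ExtClosure S (.of R (LinearMap.Pushout g j)) :=
    .ext (ofHom (inl g j)) (ofHom (desc 0 π hπj)) (inl_injective hj)
      (desc_zero_surjective (h := hπj) hπ)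
      (exact_inl_desc (h := hπj) hjπ).linearMap_ker_eq.symm hE₁ hE₂
  exact ⟨_, hY, ofHom (desc _ f hg),
    desc_surjective (h := hg) (hip.coprod_comp_surjective hπ₁ (hf ▸ hπ₂.comp hπ))⟩
end

section
/- Let S be a set of finitely presented right R-modules of projective dimension at most 1 and let (T, F) be the torsion theory generated by S. Then every finitely generated module in T is a quotient of a module in the extension closure E of S, and every finitely generated submodule of a torsion module T is contained in a submodule of T that is a quotient of a module in E. -/
open CategoryTheory CategoryTheory.Limits

universe u

variable {R : Type u} [Ring R]

/-- `F` is torsion-free for the torsion theory generated by `S`. -/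
def TorsionFreeFor (S : ModuleCat.{u} R → Prop) (F : ModuleCat.{u} R) : Prop :=
  ∀ (N : ModuleCat.{u} R), S N → ∀ φ : N ⟶ F, φ = 0

/-- `T` is torsion for the torsion theory generated by `S`. -/
def TorsionFor (S : ModuleCat.{u} R → Prop) (T : ModuleCat.{u} R) : Prop :=
  ∀ (F : ModuleCat.{u} R), TorsionFreeFor S F → ∀ φ : T ⟶ F, φ = 0

/-!
Let `t ≤ T` be the sum of all submodules of `T` that are quotients of modules in `E`. These
submodules are closed under finite sums, so a finitely generated submodule of `t` already lies
in one of them; it therefore suffices to show `t = T`, i.e. (as `T` is torsion) that `T ⧸ t` is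
torsion-free. Let `0 → P → Q → M → 0` present some `M ∈ S` and let `M → T ⧸ t`; lift it to
`g : Q → T`. The image of the finitely generated `P` lies in some `U ≤ t` which is a quotient of
some `Y ∈ E`, and projectivity of `P` lifts `P → U` to `k : P → Y`. The pushout of `Q ← P → Y`
is an extension of `M` by `Y`, hence lies in `E`, and it maps to `T` with image containing
`g(Q)`. So `g(Q) ≤ t` and the map `M → T ⧸ t` vanishes.
-/

namespace ExtClosure

variable {S : ModuleCat.{u} R → Prop}

theorem of_iso {B C : ModuleCat.{u} R} (e : B ≅ C) (hC : ExtClosure S C) :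
    ExtClosure S B := by
  have he : Function.Bijective e.hom :=
    (ConcreteCategory.isIso_iff_bijective e.hom).mp inferInstance
  refine ExtClosure.ext (A := ModuleCat.of R PUnit.{u+1}) 0 e.hom
    (fun a b _ => Subsingleton.elim a b) he.2 ?_ (ExtClosure.zero _ inferInstance) hC
  rw [ModuleCat.hom_zero, LinearMap.range_zero, LinearMap.ker_eq_bot.mpr he.1]

theorem prod {A C : ModuleCat.{u} R} (hA : ExtClosure S A) (hC : ExtClosure S C) :
    ExtClosure S (ModuleCat.of R (A × C)) :=
  ExtClosure.ext (ModuleCat.ofHom (LinearMap.inl R A C)) (ModuleCat.ofHom (LinearMap.snd R A C))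
    LinearMap.inl_injective LinearMap.snd_surjective (LinearMap.range_inl R A C) hA hC

end ExtClosure

section Pushout

variable {P Q Y M : Type u} [AddCommGroup P] [Module R P] [AddCommGroup Q] [Module R Q]
  [AddCommGroup Y] [Module R Y] [AddCommGroup M] [Module R M] (i : P →ₗ[R] Q) (k : P →ₗ[R] Y)

/-- The pushout of `Q ← P → Y` is `(Q × Y) ⧸ pushoutRel i k`. -/
abbrev pushoutRel : Submodule R (Q × Y) :=
  LinearMap.range (i.prod (-k))

def pushoutInr : Y →ₗ[R] (Q × Y) ⧸ pushoutRel i k :=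
  (pushoutRel i k).mkQ ∘ₗ LinearMap.inr R Q Y

def pushoutToCokernel : (Q × Y) ⧸ pushoutRel i k →ₗ[R] Q ⧸ LinearMap.range i :=
  (pushoutRel i k).liftQ ((LinearMap.range i).mkQ ∘ₗ LinearMap.fst R Q Y) <| by
    rintro _ ⟨p, rfl⟩
    simp

def pushoutDesc (g : Q →ₗ[R] M) (l : Y →ₗ[R] M) (h : g ∘ₗ i = l ∘ₗ k) :
    (Q × Y) ⧸ pushoutRel i k →ₗ[R] M :=
  (pushoutRel i k).liftQ (g.coprod l) <| by
    rintro _ ⟨p, rfl⟩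
    simpa [← sub_eq_add_neg, sub_eq_zero] using LinearMap.congr_fun h p

theorem pushoutDesc_comp_mkQ_inl (g : Q →ₗ[R] M) (l : Y →ₗ[R] M) (h : g ∘ₗ i = l ∘ₗ k) :
    pushoutDesc i k g l h ∘ₗ (pushoutRel i k).mkQ ∘ₗ LinearMap.inl R Q Y = g := by
  ext q
  simp [pushoutDesc]

variable {i k}

theorem pushoutInr_injective (hi : Function.Injective i) : Function.Injective (pushoutInr i k) := by
  refine (injective_iff_map_eq_zero _).mpr fun y hy => ?_
  obtain ⟨p, hp⟩ : ((0 : Q), y) ∈ pushoutRel i k := by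
    simpa [pushoutInr, Submodule.Quotient.mk_eq_zero] using hy
  have hp₁ : i p = 0 := congrArg Prod.fst hp
  have hp₂ : -k p = y := congrArg Prod.snd hp
  rw [← hp₂, hi (hp₁.trans i.map_zero.symm), map_zero, neg_zero]

theorem pushoutToCokernel_surjective : Function.Surjective (pushoutToCokernel i k) := by
  intro x
  obtain ⟨q, rfl⟩ := Submodule.mkQ_surjective _ x
  exact ⟨(pushoutRel i k).mkQ (q, 0), rfl⟩

theorem range_pushoutInr_eq_ker_pushoutToCokernel :
    LinearMap.range (pushoutInr i k) = LinearMap.ker (pushoutToCokernel i k) := by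
  ext x
  constructor
  · rintro ⟨y, rfl⟩
    simp [pushoutInr, pushoutToCokernel]
  · intro hx
    obtain ⟨⟨q, y⟩, rfl⟩ := Submodule.mkQ_surjective _ x
    obtain ⟨p, rfl⟩ : q ∈ LinearMap.range i := by
      simpa [pushoutToCokernel, Submodule.Quotient.mk_eq_zero] using hx
    -- `(0, y + k p) - (i p, y) = (i (-p), -k (-p))`
    refine ⟨y + k p, (Submodule.Quotient.eq _).mpr ⟨-p, ?_⟩⟩
    simp

end Pushout

theorem ExtClosure.pushout {S : ModuleCat.{u} R → Prop} {P Q Y : Type u}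
    [AddCommGroup P] [Module R P] [AddCommGroup Q] [Module R Q] [AddCommGroup Y] [Module R Y]
    {i : P →ₗ[R] Q} (k : P →ₗ[R] Y) (hi : Function.Injective i)
    (hY : ExtClosure S (ModuleCat.of R Y))
    (hQ : ExtClosure S (ModuleCat.of R (Q ⧸ LinearMap.range i))) :
    ExtClosure S (ModuleCat.of R ((Q × Y) ⧸ pushoutRel i k)) :=
  ExtClosure.ext (ModuleCat.ofHom (pushoutInr i k)) (ModuleCat.ofHom (pushoutToCokernel i k))
    (pushoutInr_injective hi) pushoutToCokernel_surjective
    range_pushoutInr_eq_ker_pushoutToCokernel hY hQ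

section Trace

variable (S : ModuleCat.{u} R → Prop) {M : Type u} [AddCommGroup M] [Module R M]

theorem QuotOfExtClosure.of_surjective {A B : ModuleCat.{u} R} (hA : QuotOfExtClosure S A)
    (f : A ⟶ B) (hf : Function.Surjective f) : QuotOfExtClosure S B :=
  let ⟨E, hE, π, hπ⟩ := hA
  ⟨E, hE, π ≫ f, hf.comp hπ⟩

theorem quotOfExtClosure_range {Y : ModuleCat.{u} R} (hY : ExtClosure S Y) (f : Y →ₗ[R] M) :
    QuotOfExtClosure S (ModuleCat.of R (LinearMap.range f)) :=
  ⟨Y, hY, ModuleCat.ofHom f.rangeRestrict, f.surjective_rangeRestrict⟩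

theorem quotOfExtClosure_bot : QuotOfExtClosure S (ModuleCat.of R (⊥ : Submodule R M)) :=
  ⟨_, ExtClosure.zero _ inferInstance, 𝟙 _, Function.surjective_id⟩

variable {S}

theorem QuotOfExtClosure.sup {U V : Submodule R M} (hU : QuotOfExtClosure S (ModuleCat.of R U))
    (hV : QuotOfExtClosure S (ModuleCat.of R V)) :
    QuotOfExtClosure S (ModuleCat.of R ↥(U ⊔ V)) := by
  obtain ⟨E₁, hE₁, π₁, hπ₁⟩ := hU
  obtain ⟨E₂, hE₂, π₂, hπ₂⟩ := hV
  have hUV : U ⊔ V = LinearMap.range ((U.subtype ∘ₗ π₁.hom).coprod (V.subtype ∘ₗ π₂.hom)) := by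
    rw [LinearMap.range_coprod,
      LinearMap.range_comp_of_range_eq_top _ (LinearMap.range_eq_top.mpr hπ₁),
      LinearMap.range_comp_of_range_eq_top _ (LinearMap.range_eq_top.mpr hπ₂),
      Submodule.range_subtype, Submodule.range_subtype]
  rw [hUV]
  exact quotOfExtClosure_range S (hE₁.prod hE₂) _

variable (S M)

/-- The trace of the extension closure in `M`: the sum of the images of all maps into `M` from
modules in the extension closure. -/
def extClosureTrace : Submodule R M :=
  sSup {U | QuotOfExtClosure S (ModuleCat.of R U)}

variable {S M}

theorem range_le_extClosureTrace {Y : ModuleCat.{u} R} (hY : ExtClosure S Y) (f : Y →ₗ[R] M) :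
    LinearMap.range f ≤ extClosureTrace S M :=
  le_sSup (quotOfExtClosure_range S hY f)

theorem exists_quotOfExtClosure_le_of_fg {N : Submodule R M} (hN : N.FG)
    (hle : N ≤ extClosureTrace S M) :
    ∃ U : Submodule R M, N ≤ U ∧ QuotOfExtClosure S (ModuleCat.of R U) := by
  obtain ⟨U, hU, hNU⟩ := (CompleteLattice.isCompactElement_iff_le_of_directed_sSup_le _ N).mp
    ((Submodule.fg_iff_compact N).mp hN) _ ⟨⊥, quotOfExtClosure_bot S⟩
    (fun U hU V hV => ⟨U ⊔ V, hU.sup hV, le_sup_left, le_sup_right⟩) hle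
  exact ⟨U, hNU, hU⟩

end Trace

section TorsionFree

variable {S : ModuleCat.{u} R → Prop} {P Q M : Type u} [AddCommGroup P] [Module R P]
  [AddCommGroup Q] [Module R Q] [AddCommGroup M] [Module R M] {i : P →ₗ[R] Q}

theorem range_le_extClosureTrace_of_range_comp_le [Module.Projective R P] [Module.Finite R P]
    (hi : Function.Injective i) (hQ : ExtClosure S (ModuleCat.of R (Q ⧸ LinearMap.range i)))
    (g : Q →ₗ[R] M) (hg : LinearMap.range (g ∘ₗ i) ≤ extClosureTrace S M) :
    LinearMap.range g ≤ extClosureTrace S M := by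
  obtain ⟨U, hgU, Y, hY, h, hh⟩ := exists_quotOfExtClosure_le_of_fg (Submodule.fg_range _) hg
  obtain ⟨k, hk⟩ := Module.projective_lifting_property h.hom
    ((g ∘ₗ i).codRestrict U fun p => hgU ⟨p, rfl⟩) hh
  have hcomm : g ∘ₗ i = (U.subtype ∘ₗ h.hom) ∘ₗ k := by
    rw [LinearMap.comp_assoc, hk]
    rfl
  calc LinearMap.range g
      = LinearMap.range (pushoutDesc i k g _ hcomm ∘ₗ _) := by rw [pushoutDesc_comp_mkQ_inl]
    _ ≤ LinearMap.range (pushoutDesc i k g _ hcomm) := LinearMap.range_comp_le_range _ _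
    _ ≤ extClosureTrace S M := range_le_extClosureTrace (ExtClosure.pushout k hi hY hQ) _

theorem eq_zero_of_quotient_range_to_quotient_extClosureTrace [Module.Projective R P]
    [Module.Finite R P] [Module.Projective R Q] (hi : Function.Injective i)
    (hQ : ExtClosure S (ModuleCat.of R (Q ⧸ LinearMap.range i)))
    (ψ : (Q ⧸ LinearMap.range i) →ₗ[R] M ⧸ extClosureTrace S M) : ψ = 0 := by
  obtain ⟨g, hg⟩ := Module.projective_lifting_property (extClosureTrace S M).mkQ
    (ψ ∘ₗ (LinearMap.range i).mkQ) (Submodule.mkQ_surjective _)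
  have hgi : LinearMap.range (g ∘ₗ i) ≤ extClosureTrace S M := by
    rw [← Submodule.ker_mkQ (extClosureTrace S M), LinearMap.range_le_ker_iff,
      ← LinearMap.comp_assoc, hg, LinearMap.comp_assoc]
    ext p
    simp [(Submodule.Quotient.mk_eq_zero _).mpr (LinearMap.mem_range_self i p)]
  refine Submodule.linearMap_qext _ ?_
  rw [← hg, LinearMap.zero_comp, ← LinearMap.range_le_ker_iff, Submodule.ker_mkQ]
  exact range_le_extClosureTrace_of_range_comp_le hi hQ g hgi

end TorsionFree

theorem torsionFreeFor_quotient_extClosureTrace {S : ModuleCat.{u} R → Prop}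
    (hS : ∀ N : ModuleCat.{u} R, S N → ∃ (P Q : ModuleCat.{u} R) (i : P ⟶ Q),
      Module.Finite R P ∧ Module.Projective R P ∧ Module.Projective R Q ∧
        Function.Injective i ∧ Nonempty (cokernel i ≅ N))
    (M : Type u) [AddCommGroup M] [Module R M] :
    TorsionFreeFor S (ModuleCat.of R (M ⧸ extClosureTrace S M)) := by
  intro N hN φ
  obtain ⟨P, Q, i, _, _, _, hi, ⟨e⟩⟩ := hS N hN
  let α := (ModuleCat.cokernelIsoRangeQuotient i).symm ≪≫ e
  have hα : α.hom ≫ φ = 0 := ModuleCat.hom_ext <|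
    eq_zero_of_quotient_range_to_quotient_extClosureTrace hi (ExtClosure.of_iso α (.mem N hN)) _
  rw [← α.inv_hom_id_assoc φ, hα, comp_zero]

theorem Submodule.eq_top_of_torsionFor {S : ModuleCat.{u} R → Prop} {T : ModuleCat.{u} R}
    (hT : TorsionFor S T) {N : Submodule R T} (hN : TorsionFreeFor S (ModuleCat.of R (T ⧸ N))) :
    N = ⊤ := by
  rw [← N.ker_mkQ, LinearMap.ker_eq_top]
  exact congrArg ModuleCat.Hom.hom (hT _ hN (ModuleCat.ofHom N.mkQ))

/-- Let `S` be a set of finitely presented right `R`-modules of projective dimension at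
most 1 and let `(T, F)` be the torsion theory generated by `S`.  Then every finitely
generated torsion module is a quotient of a module in the extension closure `E` of `S`,
and every finitely generated submodule of a torsion module is contained in a submodule
which is a quotient of a module in `E`. -/
theorem torsion_modules_are_quotients_of_extClosure (S : ModuleCat.{u} R → Prop)
    (hS : ∀ M : ModuleCat.{u} R, S M → Module.FinitePresentation R M ∧
      ∃ (P Q : ModuleCat.{u} R) (i : P ⟶ Q),
        Module.Finite R P ∧ Module.Projective R P ∧ Module.Finite R Q ∧
          Module.Projective R Q ∧ Function.Injective i ∧ Nonempty (cokernel i ≅ M)) :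
    (∀ T : ModuleCat.{u} R, TorsionFor S T → Module.Finite R T →
      QuotOfExtClosure S T) ∧
    (∀ T : ModuleCat.{u} R, TorsionFor S T → ∀ N : Submodule R ↥T, N.FG →
      ∃ U : Submodule R ↥T, N ≤ U ∧ QuotOfExtClosure S (ModuleCat.of R ↥U)) := by
  have hpres : ∀ N : ModuleCat.{u} R, S N → ∃ (P Q : ModuleCat.{u} R) (i : P ⟶ Q),
      Module.Finite R P ∧ Module.Projective R P ∧ Module.Projective R Q ∧
        Function.Injective i ∧ Nonempty (cokernel i ≅ N) := fun N hN => by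
    obtain ⟨-, P, Q, i, hP, hPproj, -, hQproj, hi, he⟩ := hS N hN
    exact ⟨P, Q, i, hP, hPproj, hQproj, hi, he⟩
  have hsub : ∀ T : ModuleCat.{u} R, TorsionFor S T → ∀ N : Submodule R ↥T, N.FG →
      ∃ U : Submodule R ↥T, N ≤ U ∧ QuotOfExtClosure S (ModuleCat.of R ↥U) := by
    intro T hT N hN
    have htop : extClosureTrace S T = ⊤ :=
      Submodule.eq_top_of_torsionFor hT (torsionFreeFor_quotient_extClosureTrace hpres T)
    exact exists_quotOfExtClosure_le_of_fg hN (htop ▸ le_top)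
  refine ⟨fun T hT _ => ?_, hsub⟩
  obtain ⟨U, hU, hUE⟩ := hsub T hT ⊤ Module.Finite.fg_top
  obtain rfl := top_le_iff.mp hU
  exact hUE.of_surjective S (ModuleCat.ofHom (⊤ : Submodule R T).subtype)
    fun x => ⟨⟨x, trivial⟩, rfl⟩
end
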